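/- arXiv:2206.01672 — 3 statements merged into one kernel-verified Lean document; each statement's English description precedes it below -/
import Mathlib

section
/- If (S, N) is a quadratic normalisation of class (4,3) mod e for a monoid M, then M is factorable: the map η_N derived from N is a factorability structure on (M, S). -/
/-- Apply `F` to the first two components of a triple. -/
def app1 {X : Type*} (F : X × X → X × X) : X × X × X → X × X × X :=
  fun x => ((F (x.1, x.2.1)).1, (F (x.1, x.2.1)).2, x.2.2)

/-- Apply `F` to the last two components of a triple. -/
def app2 {X : Type*} (F : X × X → X × X) : X × X × X → X × X × X :=
  fun x => (x.1, (F (x.2.1, x.2.2)).1, (F (x.2.1, x.2.2)).2)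

/-- `F_{212}`, i.e. `F₂ F₁ F₂` (position 2 applied first). -/
def C212 {X : Type*} (F : X × X → X × X) : X × X × X → X × X × X :=
  app2 F ∘ app1 F ∘ app2 F

/-- `F_{2121}`, i.e. `F₁ F₂ F₁ F₂` (position 2 applied first). -/
def C2121 {X : Type*} (F : X × X → X × X) : X × X × X → X × X × X :=
  app1 F ∘ C212 F

/-- `F_{1212}`, i.e. `F₂ F₁ F₂ F₁` (position 1 applied first). -/
def C1212 {X : Type*} (F : X × X → X × X) : X × X × X → X × X × X :=
  C212 F ∘ app1 F

/-- The minimal length of an `S`-word representing `f`. -/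
noncomputable def lenS {M : Type*} [Monoid M] (S : Set M) (f : M) : ℕ :=
  sInf {n | ∃ l : List M, l.length = n ∧ (∀ x ∈ l, x ∈ S) ∧ l.prod = f}

/-- The sum of the lengths of the components of a triple. -/
noncomputable def tripLen {M : Type*} [Monoid M] (S : Set M) (x : M × M × M) : ℕ :=
  lenS S x.1 + lenS S x.2.1 + lenS S x.2.2

/-- A factorability structure `η` on a monoid `M` with generating subset `S`
(containing `1`): `η = (η', η̄)` is a factorisation map such that, for
`F = η ∘ μ`, on every triple the maps `F₁F₂F₁F₂`, `F₂F₁F₂`, `F₂F₁F₂F₁`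
coincide or each reduces the total length. -/
structure Factorability {M : Type*} [Monoid M] (S : Set M) (eta : M → M × M) : Prop where
  gen : ∀ f : M, ∃ l : List M, (∀ x ∈ l, x ∈ S) ∧ l.prod = f
  one_mem : (1 : M) ∈ S
  eta_one : eta 1 = (1, 1)
  head_mem : ∀ f : M, f ≠ 1 → (eta f).1 ∈ S ∧ (eta f).1 ≠ 1
  split : ∀ f : M, f ≠ 1 → (eta f).1 * (eta f).2 = f
  geodesic : ∀ f : M, f ≠ 1 → lenS S f = lenS S (eta f).1 + lenS S (eta f).2
  axm : ∀ x : M × M × M,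
    (C2121 (fun p : M × M => eta (p.1 * p.2)) x = C212 (fun p : M × M => eta (p.1 * p.2)) x ∧
      C1212 (fun p : M × M => eta (p.1 * p.2)) x = C212 (fun p : M × M => eta (p.1 * p.2)) x) ∨
    (tripLen S (C2121 (fun p : M × M => eta (p.1 * p.2)) x) < tripLen S x ∧
      tripLen S (C212 (fun p : M × M => eta (p.1 * p.2)) x) < tripLen S x ∧
      tripLen S (C1212 (fun p : M × M => eta (p.1 * p.2)) x) < tripLen S x)

/-- Apply `N` to the length-two factor of `w` at positions `i, i+1` (1-indexed). -/
def applyAt {A : Type*} (N : List A → List A) (i : ℕ) (w : List A) : List A :=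
  w.take (i - 1) ++ N ((w.drop (i - 1)).take 2) ++ w.drop (i + 1)

/-- Apply `N` to length-two factors at the given sequence of positions,
leftmost position in the list applied first. -/
def applySeq {A : Type*} (N : List A → List A) (pos : List ℕ) (w : List A) : List A :=
  pos.foldl (fun v i => applyAt N i v) w

/-- The alternating sequence of positions `s, 3-s, s, ...` of length `k` (with `s ∈ {1,2}`). -/
def altSeq : ℕ → ℕ → List ℕ
  | _, 0 => []
  | s, k + 1 => s :: altSeq (3 - s) k

/-- A quadratic normalisation: a length-preserving map, identity on letters,
satisfying `N(u|v|w) = N(u|N(v)|w)`, for which a word is normal iff all its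
length-two factors are, and which is computed by finitely many applications
of its restriction to length-two factors. -/
structure QuadraticNormalisation {A : Type*} (N : List A → List A) : Prop where
  len : ∀ w : List A, (N w).length = w.length
  letter : ∀ a : A, N [a] = [a]
  mid : ∀ u v w : List A, N (u ++ v ++ w) = N (u ++ N v ++ w)
  normal_iff : ∀ w : List A, N w = w ↔
    ∀ (u v : List A) (a b : A), w = u ++ a :: b :: v → N [a, b] = [a, b]
  reach : ∀ w : List A, ∃ pos : List ℕ, N w = applySeq N pos w

/-- The normalisation is of left-class `m`. -/
def LeftClass {A : Type*} (N : List A → List A) (m : ℕ) : Prop :=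
  ∀ w : List A, w.length = 3 → N w = applySeq N (altSeq 1 m) w

/-- The normalisation is of right-class `n`. -/
def RightClass {A : Type*} (N : List A → List A) (n : ℕ) : Prop :=
  ∀ w : List A, w.length = 3 → N w = applySeq N (altSeq 2 n) w

/-- The normalisation is of class `(m, n)`. -/
def IsClass {A : Type*} (N : List A → List A) (m n : ℕ) : Prop :=
  LeftClass N m ∧ RightClass N n

/-- `e` is an `N`-neutral element: `N(w|e) = N(e|w) = N(w)|e` for every word `w`. -/
def Neutral {A : Type*} (N : List A → List A) (e : A) : Prop :=
  ∀ w : List A, N (w ++ [e]) = N w ++ [e] ∧ N (e :: w) = N w ++ [e]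

/-- Evaluation of a word over the subset `S` in the monoid `M`. -/
def evList {M : Type*} [Monoid M] {S : Set M} (w : List ↥S) : M :=
  (w.map (fun s => (s : M))).prod

/-- `M` admits the presentation `⟨S | {w = N(w)} ∪ {e = 1}⟩`. -/
def PresentedModE {M : Type*} [Monoid M] (S : Set M) (N : List ↥S → List ↥S) (e : ↥S) : Prop :=
  Function.Surjective (⇑(FreeMonoid.lift (fun s : ↥S => (s : M)))) ∧
  ∀ u v : FreeMonoid ↥S,
    FreeMonoid.lift (fun s : ↥S => (s : M)) u = FreeMonoid.lift (fun s : ↥S => (s : M)) v ↔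
      conGen (fun u v : FreeMonoid ↥S =>
        FreeMonoid.toList v = N (FreeMonoid.toList u) ∨ (u = FreeMonoid.of e ∧ v = 1)) u v

open Classical in
/-- Remove all occurrences of `e` from a word. -/
noncomputable def removeE {A : Type*} (e : A) : List A → List A
  | [] => []
  | a :: w => if a = e then removeE e w else a :: removeE e w

namespace QNF
variable {A : Type*} {e : A}

theorem removeE_nil : removeE e ([] : List A) = [] := by simp [removeE]

theorem removeE_cons_self (w : List A) : removeE e (e :: w) = removeE e w := by
  simp [removeE]

theorem removeE_cons_ne {a : A} (h : a ≠ e) (w : List A) :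
    removeE e (a :: w) = a :: removeE e w := by
  simp [removeE, h]

theorem removeE_append (x y : List A) :
    removeE e (x ++ y) = removeE e x ++ removeE e y := by
  induction x with
  | nil => simp [removeE_nil]
  | cons a x ih =>
      by_cases h : a = e
      · subst h; simp only [List.cons_append, removeE_cons_self, ih]
      · simp only [List.cons_append, removeE_cons_ne h, ih]

theorem removeE_length_le (w : List A) : (removeE e w).length ≤ w.length := by
  induction w with
  | nil => simp [removeE_nil]
  | cons a w ih =>
      by_cases h : a = e
      · subst h; rw [removeE_cons_self]; exact ih.trans (by simp)
      · rw [removeE_cons_ne h]; simpa using ih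

theorem not_mem_removeE (w : List A) : e ∉ removeE e w := by
  induction w with
  | nil => simp [removeE_nil]
  | cons a w ih =>
      by_cases h : a = e
      · subst h; rw [removeE_cons_self]; exact ih
      · rw [removeE_cons_ne h]
        simp only [List.mem_cons]
        rintro (rfl | hm)
        · exact h rfl
        · exact ih hm

theorem removeE_of_not_mem {w : List A} (h : e ∉ w) : removeE e w = w := by
  induction w with
  | nil => exact removeE_nil
  | cons a w ih =>
      rw [removeE_cons_ne (by rintro rfl; exact h (by simp)) w]
      rw [ih (fun hw => h (by simp [hw]))]

theorem removeE_eq_self_of_length {w : List A} (h : (removeE e w).length = w.length) :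
    removeE e w = w := by
  induction w with
  | nil => exact removeE_nil
  | cons a w ih =>
      by_cases ha : a = e
      · subst ha
        rw [removeE_cons_self] at h
        have := removeE_length_le (e := a) w
        simp at h; omega
      · rw [removeE_cons_ne ha] at h ⊢
        rw [ih (by simpa using h)]

theorem removeE_singleton_ne {a : A} (h : a ≠ e) : removeE e [a] = [a] := by
  rw [removeE_cons_ne h, removeE_nil]

theorem removeE_singleton_self : removeE e [e] = ([] : List A) := by
  rw [removeE_cons_self, removeE_nil]

end QNF
namespace QNF
variable {A : Type*} {N : List A → List A} {e : A}

section NormBasic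
variable (hQ : QuadraticNormalisation N)
include hQ

theorem norm_nil : N [] = [] := List.length_eq_zero_iff.mp (hQ.len [])

theorem norm_idem (v : List A) : N (N v) = N v := by
  have h := hQ.mid [] v []
  simpa using h.symm

theorem norm_append_left (u v : List A) : N (u ++ v) = N (N u ++ v) := by
  have h := hQ.mid [] u v
  simpa using h

theorem norm_append_right (u v : List A) : N (u ++ v) = N (u ++ N v) := by
  have h := hQ.mid u v []
  simpa using h

theorem norm_cons_right (a : A) (v : List A) : N (a :: v) = N (a :: N v) := by
  have h := norm_append_right hQ [a] v
  simpa using h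

/-- the N-image of a two-letter word is a two-letter word -/
theorem pair (a b : A) : ∃ x y, N [a, b] = [x, y] := by
  have h := hQ.len [a, b]
  match hw : N [a, b] with
  | [] => rw [hw] at h; simp at h
  | [x] => rw [hw] at h; simp at h
  | x :: y :: z :: r => rw [hw] at h; simp at h
  | [x, y] => exact ⟨x, y, rfl⟩

/-- two-letter factors of a normal word are normal -/
theorem factor_normal {w : List A} (hw : N w = w) {u v : List A} {a b : A}
    (h : w = u ++ a :: b :: v) : N [a, b] = [a, b] :=
  (hQ.normal_iff w).mp hw u v a b h

theorem norm_factor_normal (w : List A) {u v : List A} {a b : A}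
    (h : N w = u ++ a :: b :: v) : N [a, b] = [a, b] :=
  factor_normal hQ (norm_idem hQ w) h

theorem normal_pair_of_norm {a b x y : A} (h : N [a, b] = [x, y]) : N [x, y] = [x, y] := by
  have := norm_idem hQ [a, b]
  rw [h] at this; exact this

end NormBasic

section NormNeutral
variable (hQ : QuadraticNormalisation N) (hNeu : Neutral N e)
include hQ hNeu

theorem norm_insert_e (a b : List A) : N (a ++ e :: b) = N (a ++ b) ++ [e] := by
  have h1 : N (a ++ (e :: b)) = N (a ++ N (e :: b)) := norm_append_right hQ a (e :: b)
  rw [h1, (hNeu b).2, ← List.append_assoc, (hNeu (a ++ N b)).1,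
    ← norm_append_right hQ a b]

theorem norm_e_pair (x : A) : N [e, x] = [x, e] := by
  have h := (hNeu [x]).2
  rwa [hQ.letter x] at h

/-- in a normal pair, if the first letter is `e` then so is the second -/
theorem normal_pair_e {y : A} (h : N [e, y] = [e, y]) : y = e := by
  have h2 := norm_e_pair hQ hNeu y
  rw [h] at h2
  exact ((List.cons.injEq _ _ _ _).mp h2 |>.1).symm

end NormNeutral
end QNF
set_option linter.unusedSectionVars false
namespace QNF
variable {A : Type*} {N : List A → List A} {e : A}

/-- The normal form map: normalise then remove `e`s. -/
noncomputable def Phi (N : List A → List A) (e : A) (w : List A) : List A :=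
  removeE e (N w)

/-- `Good` words: fixed points of `Phi`, i.e. normal `e`-free words. -/
def Good (N : List A → List A) (e : A) (w : List A) : Prop := Phi N e w = w

section PhiBasic
variable (hQ : QuadraticNormalisation N) (hNeu : Neutral N e)
include hQ hNeu

theorem phi_insert_e (a b : List A) : Phi N e (a ++ e :: b) = Phi N e (a ++ b) := by
  unfold Phi
  rw [norm_insert_e hQ hNeu, removeE_append, removeE_singleton_self, List.append_nil]

theorem phi_removeE_mid (w a b : List A) :
    Phi N e (a ++ removeE e w ++ b) = Phi N e (a ++ w ++ b) := by
  induction w generalizing a with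
  | nil => rw [removeE_nil]
  | cons c w ih =>
      by_cases hc : c = e
      · subst hc
        rw [removeE_cons_self]
        rw [ih a]
        have : a ++ c :: w ++ b = a ++ c :: (w ++ b) := by simp
        rw [this, phi_insert_e hQ hNeu a (w ++ b)]
        simp
      · rw [removeE_cons_ne hc]
        have h1 : a ++ c :: removeE e w ++ b = (a ++ [c]) ++ removeE e w ++ b := by simp
        have h2 : a ++ c :: w ++ b = (a ++ [c]) ++ w ++ b := by simp
        rw [h1, h2, ih (a ++ [c])]

theorem phi_removeE_left (w b : List A) :
    Phi N e (removeE e w ++ b) = Phi N e (w ++ b) := by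
  have h := phi_removeE_mid hQ hNeu w [] b
  simpa using h

theorem phi_removeE_right (a w : List A) :
    Phi N e (a ++ removeE e w) = Phi N e (a ++ w) := by
  have h := phi_removeE_mid hQ hNeu w a []
  simpa using h

theorem phi_norm (w : List A) : Phi N e (N w) = Phi N e w := by
  unfold Phi; rw [norm_idem hQ]

theorem phi_norm_left (u v : List A) : Phi N e (N u ++ v) = Phi N e (u ++ v) := by
  unfold Phi; rw [← norm_append_left hQ]

theorem phi_norm_right (u v : List A) : Phi N e (u ++ N v) = Phi N e (u ++ v) := by
  unfold Phi; rw [← norm_append_right hQ]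

theorem phi_phi_left (u v : List A) : Phi N e (Phi N e u ++ v) = Phi N e (u ++ v) := by
  unfold Phi at *
  rw [show removeE e (N u) ++ v = removeE e (N u) ++ v from rfl]
  have := phi_removeE_left hQ hNeu (N u) v
  unfold Phi at this
  rw [this]
  exact congrArg (removeE e) (norm_append_left hQ u v).symm

theorem phi_phi_right (u v : List A) : Phi N e (u ++ Phi N e v) = Phi N e (u ++ v) := by
  unfold Phi at *
  have := phi_removeE_right hQ hNeu u (N v)
  unfold Phi at this
  rw [this]
  exact congrArg (removeE e) (norm_append_right hQ u v).symm

theorem phi_cons_phi (a : A) (v : List A) : Phi N e (a :: Phi N e v) = Phi N e (a :: v) := by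
  have := phi_phi_right hQ hNeu [a] v
  simpa using this

theorem phi_idem (w : List A) : Phi N e (Phi N e w) = Phi N e w := by
  have h1 : Phi N e (Phi N e w) = Phi N e (N w) := by
    have := phi_removeE_left hQ hNeu (N w) []
    unfold Phi at *
    simpa using this
  rw [h1, phi_norm hQ hNeu]

theorem phi_length_le (w : List A) : (Phi N e w).length ≤ w.length := by
  unfold Phi
  exact (removeE_length_le _).trans (le_of_eq (hQ.len w))

theorem phi_nil : Phi N e ([] : List A) = [] := by
  unfold Phi; rw [norm_nil hQ, removeE_nil]

theorem good_nil : Good N e ([] : List A) := phi_nil hQ hNeu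

theorem good_phi (w : List A) : Good N e (Phi N e w) := phi_idem hQ hNeu w

theorem good_norm {w : List A} (h : Good N e w) : N w = w := by
  unfold Good Phi at h
  have hlen : (removeE e (N w)).length = (N w).length := by
    rw [h, hQ.len]
  have := removeE_eq_self_of_length hlen
  rw [← this, h]

theorem good_not_mem {w : List A} (h : Good N e w) : e ∉ w := by
  unfold Good Phi at h
  rw [← h]
  exact not_mem_removeE _

theorem good_single {a : A} (h : a ≠ e) : Good N e [a] := by
  unfold Good Phi
  rw [hQ.letter, removeE_singleton_ne h]

theorem good_of_normal_not_mem {w : List A} (h1 : N w = w) (h2 : e ∉ w) : Good N e w := by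
  unfold Good Phi
  rw [h1, removeE_of_not_mem h2]

theorem good_tail {a : A} {w : List A} (h : Good N e (a :: w)) : Good N e w := by
  have hn : N (a :: w) = a :: w := good_norm hQ hNeu h
  apply good_of_normal_not_mem hQ hNeu
  · exact (hQ.normal_iff w).mpr (fun u v x y huv => by
      exact factor_normal hQ hn (u := a :: u) (by rw [huv]; rfl))
  · exact fun hm => good_not_mem hQ hNeu h (by simp [hm])

theorem good_drop1 {w : List A} (h : Good N e w) : Good N e (w.drop 1) := by
  match w with
  | [] => simpa using h
  | a :: w => exact good_tail hQ hNeu h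

theorem good_take1 {w : List A} (h : Good N e w) : Good N e (w.take 1) := by
  match w with
  | [] => simpa using h
  | a :: w =>
      have : a ≠ e := fun hh => good_not_mem hQ hNeu h (by simp [hh])
      simpa using good_single hQ hNeu this

theorem good_cons_head_ne {a : A} {w : List A} (h : Good N e (a :: w)) : a ≠ e :=
  fun hh => good_not_mem hQ hNeu h (by simp [hh])

end PhiBasic
end QNF
namespace QNF
section SW
set_option linter.unusedSectionVars false
variable {A : Type*} {N : List A → List A} {e : A}
variable (hQ : QuadraticNormalisation N) (h3 : RightClass N 3)
include hQ h3

theorem applyAt_one3 (a b c : A) : applyAt N 1 [a, b, c] = N [a, b] ++ [c] := by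
  simp [applyAt]

theorem applyAt_two3 (a b c : A) : applyAt N 2 [a, b, c] = a :: N [b, c] := by
  simp [applyAt]

theorem rc3_eval (a b c : A) :
    N [a, b, c] = applyAt N 2 (applyAt N 1 (applyAt N 2 [a, b, c])) := by
  have h := h3 [a, b, c] (by simp)
  rw [h]
  rfl

theorem rc3_comp {a b c x y x2 y2 : A} (hbc : N [b, c] = [b, c])
    (hab : N [a, b] = [x, y]) (hyc : N [y, c] = [x2, y2]) :
    N [a, b, c] = [x, x2, y2] := by
  rw [rc3_eval hQ h3 a b c, applyAt_two3 hQ h3 a b c, hbc,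
    applyAt_one3 hQ h3 a b c, hab]
  have h2 : applyAt N 2 [x, y, c] = x :: N [y, c] := applyAt_two3 hQ h3 x y c
  rw [show ([x, y] ++ [c] : List A) = [x, y, c] from rfl, h2, hyc]

variable (hNeu : Neutral N e)
include hNeu

theorem core_sw : ∀ (n : ℕ) (d' : List A), d'.length ≤ n → ∀ s d₁ x y : A,
    Good N e (d₁ :: d') → N [s, d₁] = [x, y] →
    N (s :: d₁ :: d') = x :: N (y :: d') := by
  intro n
  induction n with
  | zero =>
      intro d' hlen s d₁ x y _ hab
      have hd' : d' = [] := List.length_eq_zero_iff.mp (Nat.le_zero.mp hlen)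
      subst hd'
      rw [show (s :: d₁ :: [] : List A) = [s, d₁] from rfl, hab, hQ.letter y]
  | succ n ih =>
      intro d' hlen s d₁ x y hd hab
      match d' with
      | [] =>
          rw [show (s :: d₁ :: [] : List A) = [s, d₁] from rfl, hab, hQ.letter y]
      | d₂ :: d'' =>
          have hlen'' : d''.length ≤ n := by simp at hlen; omega
          have hd12 : N [d₁, d₂] = [d₁, d₂] :=
            factor_normal hQ (good_norm hQ hNeu hd) (u := []) (v := d'') rfl
          obtain ⟨x2, y2, hyd2⟩ := pair hQ y d₂
          have h3c : N [s, d₁, d₂] = [x, x2, y2] := rc3_comp hQ h3 hd12 hab hyd2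
          have hgood2 : Good N e (d₂ :: d'') := good_tail hQ hNeu hd
          have ih1 : N (y :: d₂ :: d'') = x2 :: N (y2 :: d'') :=
            ih d'' hlen'' y d₂ x2 y2 hgood2 hyd2
          -- step A
          have stepA : N (s :: d₁ :: d₂ :: d'') = N (x :: x2 :: N (y2 :: d'')) := by
            have e1 : (s :: d₁ :: d₂ :: d'' : List A) = [s, d₁, d₂] ++ d'' := rfl
            rw [e1, norm_append_left hQ, h3c]
            have e2 : ([x, x2, y2] ++ d'' : List A) = [x, x2] ++ (y2 :: d'') := rfl
            rw [e2, norm_append_right hQ]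
            rfl
          -- step B : x :: x2 :: N (y2 :: d'') is normal
          have stepB : N (x :: x2 :: N (y2 :: d'')) = x :: x2 :: N (y2 :: d'') := by
            apply (hQ.normal_iff _).mpr
            intro u v g h huv
            match u, huv with
            | [], huv =>
                simp only [List.nil_append, List.cons.injEq] at huv
                obtain ⟨hg, hh, -⟩ := huv
                subst hg; subst hh
                exact norm_factor_normal hQ [s, d₁, d₂] (u := []) (v := [y2])
                  (by rw [h3c]; rfl)
            | [u₁], huv =>
                simp only [List.cons_append, List.nil_append, List.cons.injEq] at huv
                obtain ⟨-, hg, h2⟩ := huv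
                subst hg
                match d'', h2 with
                | [], h2 =>
                    rw [hQ.letter y2] at h2
                    have hh : y2 = h := by
                      simp only [List.cons.injEq] at h2
                      exact h2.1
                    subst hh
                    exact norm_factor_normal hQ [s, d₁, d₂] (u := [x]) (v := [])
                      (by rw [h3c]; rfl)
                | d₃ :: d4, h2 =>
                    obtain ⟨x3, y3, hy2d3⟩ := pair hQ y2 d₃
                    have ih2 : N (y2 :: d₃ :: d4) = x3 :: N (y3 :: d4) :=
                      ih d4 (by simp at hlen ⊢; omega) y2 d₃ x3 y3
                        (good_tail hQ hNeu hgood2) hy2d3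
                    rw [ih2] at h2
                    have hh : x3 = h := by
                      simp only [List.cons.injEq] at h2
                      exact h2.1
                    subst hh
                    have hd23 : N [d₂, d₃] = [d₂, d₃] :=
                      factor_normal hQ (good_norm hQ hNeu hd) (u := [d₁]) (v := d4) rfl
                    have h3c2 : N [y, d₂, d₃] = [x2, x3, y3] := rc3_comp hQ h3 hd23 hyd2 hy2d3
                    exact norm_factor_normal hQ [y, d₂, d₃] (u := []) (v := [y3])
                      (by rw [h3c2]; rfl)
            | u₁ :: u₂ :: u', huv =>
                simp only [List.cons_append, List.cons.injEq] at huv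
                obtain ⟨-, -, h2⟩ := huv
                exact norm_factor_normal hQ (y2 :: d'') (u := u') (v := v) h2
          rw [stepA, stepB, ih1]

end SW
end QNF
namespace QNF
section SWU
set_option linter.unusedSectionVars false
variable {A : Type*} {N : List A → List A} {e : A}
variable (hQ : QuadraticNormalisation N) (h3 : RightClass N 3) (hNeu : Neutral N e)
include hQ h3 hNeu

theorem phi_cons_e {d : List A} (hd : Good N e d) : Phi N e (e :: d) = d := by
  unfold Phi
  rw [(hNeu d).2, good_norm hQ hNeu hd, removeE_append, removeE_singleton_self,
    removeE_of_not_mem (good_not_mem hQ hNeu hd), List.append_nil]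

theorem phi_single (s : A) : Phi N e [s] = removeE e [s] := by
  unfold Phi; rw [hQ.letter]

/-- if the first letter of the `N`-image of a pair is `e`, so is the second -/
theorem pair_e {s d₁ y : A} (h : N [s, d₁] = [e, y]) : y = e :=
  normal_pair_e hQ hNeu (normal_pair_of_norm hQ h)

theorem swu {d₁ : A} {d' : List A} (hd : Good N e (d₁ :: d')) (s : A) {x y : A}
    (hxy : N [s, d₁] = [x, y]) :
    Phi N e (s :: d₁ :: d') = removeE e [x] ++ Phi N e (y :: d') := by
  unfold Phi
  rw [core_sw hQ h3 hNeu d'.length d' le_rfl s d₁ x y hd hxy,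
    show (x :: N (y :: d') : List A) = [x] ++ N (y :: d') from rfl, removeE_append]

/-- uniform length bound used repeatedly -/
theorem phi_append_length (u v : List A) :
    (Phi N e (u ++ v)).length ≤ u.length + v.length := by
  have := phi_length_le (e := e) hQ hNeu (u ++ v)
  simpa using this

end SWU
end QNF
namespace QNF
section ML
set_option linter.unusedSectionVars false
variable {A : Type*} {N : List A → List A} {e : A}

theorem good_eq {w : List A} (h : Good N e w) : Phi N e w = w := h

theorem take1_drop1 (l : List A) : (l.take 1).drop 1 = [] := by
  cases l <;> simp

theorem min1_add_drop1 (l : List A) : min 1 l.length + (l.drop 1).length = l.length := by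
  cases l <;> simp <;> omega

variable (hQ : QuadraticNormalisation N) (h3 : RightClass N 3) (hNeu : Neutral N e)
include hQ h3 hNeu

theorem ml (p : List A) (hp : Good N e p) :
    ∀ u : List A, Good N e u → ∀ q t z : List A,
    q = Phi N e (u ++ p.take 1) → t = Phi N e (q.drop 1 ++ p.drop 1) →
    z = Phi N e (u ++ p) →
    z = q.take 1 ++ t ∨
      (z.length < u.length + p.length ∧ min 1 q.length + t.length < u.length + p.length) := by
  match hpm : p, hp with
  | [], hp =>
      intro u hu q t z hq ht hz
      left
      rw [List.take_nil, List.append_nil, good_eq hu] at hq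
      rw [List.append_nil, good_eq hu] at hz
      subst hq; subst hz
      rw [List.drop_nil, List.append_nil, good_eq (good_drop1 hQ hNeu hu)] at ht
      subst ht
      exact (List.take_append_drop 1 _).symm
  | p₁ :: p', hp =>
      intro u
      induction u with
      | nil =>
          intro hu q t z hq ht hz
          left
          rw [List.nil_append, good_eq (good_take1 hQ hNeu hp)] at hq
          subst hq
          rw [take1_drop1, List.nil_append, good_eq (good_drop1 hQ hNeu hp)] at ht
          subst ht
          rw [List.nil_append, good_eq hp] at hz
          subst hz
          exact (List.take_append_drop 1 _).symm
      | cons a u' ih =>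
          intro hu q t z hq ht hz
          have ha : a ≠ e := good_cons_head_ne hQ hNeu hu
          have hu' : Good N e u' := good_tail hQ hNeu hu
          obtain ⟨q0, hq0def⟩ : ∃ q0, Phi N e (u' ++ (p₁ :: p').take 1) = q0 := ⟨_, rfl⟩
          obtain ⟨t0, ht0def⟩ : ∃ t0, Phi N e (q0.drop 1 ++ p') = t0 := ⟨_, rfl⟩
          obtain ⟨z0, hz0def⟩ : ∃ z0, Phi N e (u' ++ (p₁ :: p')) = z0 := ⟨_, rfl⟩
          have hgq0 : Good N e q0 := by rw [← hq0def]; exact good_phi hQ hNeu _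
          have hgz0 : Good N e z0 := by rw [← hz0def]; exact good_phi hQ hNeu _
          have hq2 : q = Phi N e (a :: q0) := by
            rw [hq, List.cons_append, ← phi_cons_phi hQ hNeu a (u' ++ (p₁ :: p').take 1),
              hq0def]
          have hz2 : z = Phi N e (a :: z0) := by
            rw [hz, List.cons_append, ← phi_cons_phi hQ hNeu a (u' ++ (p₁ :: p')), hz0def]
          have hq0len : q0.length ≤ u'.length + 1 := by
            rw [← hq0def]
            have := phi_append_length hQ h3 hNeu u' ((p₁ :: p').take 1)
            simpa using this
          have ihinst := ih hu' q0 t0 z0 (by rw [← hq0def]) (by rw [← ht0def]; rfl)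
            (by rw [← hz0def])
          match q0, hq0def, ht0def, hgq0, hq0len, hq2, ihinst with
          | [], hq0def, ht0def, hgq0, hq0len, hq2, ihinst =>
              right
              have hqa : q = [a] := by
                rw [hq2, show (a :: ([] : List A)) = [a] from rfl, phi_single hQ h3 hNeu,
                  removeE_singleton_ne ha]
              have hzq : z = Phi N e (a :: p') := by
                have h1 : Phi N e ((a :: u') ++ (p₁ :: p')) =
                    Phi N e (Phi N e ((a :: u') ++ (p₁ :: p').take 1) ++ p') := by
                  rw [phi_phi_left hQ hNeu, List.append_assoc]
                  rfl
                rw [hz, h1, ← hq, hqa]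
                rfl
              have hzlen : z.length ≤ p'.length + 1 := by
                rw [hzq]
                have := phi_length_le hQ hNeu (a :: p')
                simpa using this
              have htp : t = p' := by
                rw [ht, hqa]
                simpa using good_eq (good_drop1 hQ hNeu hp)
              constructor
              · simp only [List.length_cons]
                omega
              · rw [hqa, htp]
                simp only [List.length_cons, List.length_singleton]
                omega
          | q01 :: q0'', hq0def, ht0def, hgq0, hq0len, hq2, ihinst =>
              obtain ⟨x, y, hxy⟩ := pair hQ a q01
              have hgq0'' : Good N e q0'' := good_tail hQ hNeu hgq0
              have hq3 : q = removeE e [x] ++ Phi N e (y :: q0'') := by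
                rw [hq2]; exact swu hQ h3 hNeu hgq0 a hxy
              have ht0e : Phi N e (q0'' ++ p') = t0 := by rw [← ht0def]; rfl
              have hgt0 : Good N e t0 := by rw [← ht0e]; exact good_phi hQ hNeu _
              have ht0len : t0.length ≤ q0''.length + p'.length := by
                rw [← ht0e]; exact phi_append_length hQ h3 hNeu _ _
              -- the identity t = Phi (y :: t0), valid whenever x ≠ e
              have key_t : x ≠ e → t = Phi N e (y :: t0) := by
                intro hx
                rw [removeE_singleton_ne hx] at hq3
                have hqd : q.drop 1 = Phi N e (y :: q0'') := by rw [hq3]; rfl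
                have e2 : Phi N e (Phi N e (y :: q0'') ++ p') = Phi N e ((y :: q0'') ++ p') :=
                  phi_phi_left hQ hNeu _ _
                have e4 : Phi N e (y :: (q0'' ++ p')) = Phi N e (y :: Phi N e (q0'' ++ p')) :=
                  (phi_cons_phi hQ hNeu y (q0'' ++ p')).symm
                rw [ht, hqd]
                calc Phi N e (Phi N e (y :: q0'') ++ (p₁ :: p').drop 1)
                    = Phi N e ((y :: q0'') ++ p') := e2
                  _ = Phi N e (y :: (q0'' ++ p')) := by rw [List.cons_append]
                  _ = Phi N e (y :: Phi N e (q0'' ++ p')) := e4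
                  _ = Phi N e (y :: t0) := by rw [ht0e]
              rcases ihinst with hzl | ⟨hz0b, hqt0b⟩
              · -- IH left : z0 = q01 :: t0
                have hzl' : z0 = q01 :: t0 := by simpa using hzl
                have hz3 : z = removeE e [x] ++ Phi N e (y :: t0) := by
                  rw [hz2, hzl']
                  exact swu hQ h3 hNeu (by rw [← hzl']; exact hgz0) a hxy
                by_cases hx : x = e
                · -- collapse case
                  right
                  have hy : y = e := pair_e hQ h3 hNeu (by rw [hx] at hxy; exact hxy)
                  subst hx; subst hy
                  rw [removeE_singleton_self, List.nil_append] at hz3 hq3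
                  rw [phi_cons_e hQ h3 hNeu hgt0] at hz3
                  rw [phi_cons_e hQ h3 hNeu hgq0''] at hq3
                  have htlen : t.length ≤ (q0''.drop 1).length + p'.length := by
                    rw [ht, hq3]
                    exact phi_append_length hQ h3 hNeu _ _
                  have hmin := min1_add_drop1 q0''
                  constructor
                  · rw [hz3]
                    simp only [List.length_cons] at *
                    omega
                  · rw [hq3]
                    have hmin2 := min1_add_drop1 (q0'' : List A)
                    have : min 1 q0''.length ≤ 1 := min_le_left _ _
                    simp only [List.length_cons] at *
                    omega
                · -- good case
                  left
                  rw [removeE_singleton_ne hx] at hz3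
                  have hqt : q.take 1 = [x] := by
                    rw [hq3, removeE_singleton_ne hx]; rfl
                  rw [hz3, hqt, key_t hx]
              · -- IH right
                right
                have hzlen : z.length ≤ z0.length + 1 := by
                  have := phi_length_le hQ hNeu (a :: z0)
                  rw [← hz2] at this
                  simpa using this
                constructor
                · simp only [List.length_cons] at *
                  omega
                · by_cases hx : x = e
                  · have hy : y = e := pair_e hQ h3 hNeu (by rw [hx] at hxy; exact hxy)
                    subst hx; subst hy
                    rw [removeE_singleton_self, List.nil_append,
                      phi_cons_e hQ h3 hNeu hgq0''] at hq3
                    have htlen : t.length ≤ (q0''.drop 1).length + p'.length := by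
                      rw [ht, hq3]
                      exact phi_append_length hQ h3 hNeu _ _
                    have hmin := min1_add_drop1 q0''
                    have : min 1 q0''.length ≤ 1 := min_le_left _ _
                    rw [hq3]
                    simp only [List.length_cons] at *
                    omega
                  · have ht2 := key_t hx
                    have htlen : t.length ≤ t0.length + 1 := by
                      have := phi_length_le hQ hNeu (y :: t0)
                      rw [← ht2] at this
                      simpa using this
                    have hminq : min 1 q.length ≤ 1 := min_le_left _ _
                    have hminq0 : min 1 (q01 :: q0'').length = 1 := by simp
                    rw [hminq0] at hqt0b
                    simp only [List.length_cons] at *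
                    omega

end ML
end QNF
namespace QNF
section MonoidLayer
set_option linter.unusedSectionVars false
variable {M : Type*} [Monoid M] {S : Set M} {N : List ↥S → List ↥S} {e : ↥S}

theorem evList_eq {M : Type*} [Monoid M] {S : Set M} (w : List ↥S) :
    evList w = (w.map Subtype.val).prod := by
  simp [evList]

theorem evList_toList {M : Type*} [Monoid M] {S : Set M} (x : FreeMonoid ↥S) :
    evList (FreeMonoid.toList x) = FreeMonoid.lift (fun s : ↥S => (s : M)) x := by
  rw [FreeMonoid.lift_apply]
  simp [evList]

theorem evList_append (u v : List ↥S) : evList (u ++ v) = (evList u : M) * evList v := by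
  simp [evList]

theorem evList_nil : evList ([] : List ↥S) = (1 : M) := by simp [evList]

theorem evList_singleton (s : ↥S) : evList [s] = (s : M) := by simp [evList]

theorem evList_cons (s : ↥S) (l : List ↥S) : evList (s :: l) = (s : M) * evList l := by
  simp [evList]

theorem lift_ofList (l : List ↥S) :
    FreeMonoid.lift (fun s : ↥S => (s : M)) (FreeMonoid.ofList l) = evList l := by
  rw [FreeMonoid.lift_apply]
  simp [evList]

variable (hQ : QuadraticNormalisation N) (h3 : RightClass N 3) (hNeu : Neutral N e)
variable (hPres : PresentedModE S N e)
include hQ hNeu hPres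

theorem coe_e_eq_one : (e : M) = 1 := by
  have h := (hPres.2 (FreeMonoid.of e) 1).mpr (ConGen.Rel.of _ _ (Or.inr ⟨rfl, rfl⟩))
  simpa using h

theorem pi_norm (w : List ↥S) : evList (N w) = (evList w : M) := by
  have h := (hPres.2 (FreeMonoid.ofList w) (FreeMonoid.ofList (N w))).mpr
    (ConGen.Rel.of _ _ (Or.inl (by simp)))
  rw [lift_ofList, lift_ofList] at h
  exact h.symm

theorem pi_removeE (w : List ↥S) : evList (removeE e w) = (evList w : M) := by
  induction w with
  | nil => rw [removeE_nil]
  | cons a w ih =>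
      by_cases ha : a = e
      · subst ha
        rw [removeE_cons_self, evList_cons, coe_e_eq_one hQ hNeu hPres, one_mul, ih]
      · rw [removeE_cons_ne ha, evList_cons, evList_cons, ih]

theorem pi_phi (w : List ↥S) : evList (Phi N e w) = (evList w : M) := by
  unfold Phi
  rw [pi_removeE hQ hNeu hPres, pi_norm hQ hNeu hPres]

theorem phi_e_singleton : Phi N e [e] = [] := by
  unfold Phi
  rw [hQ.letter, removeE_singleton_self]

theorem phi_invariant : ∀ u v : FreeMonoid ↥S,
    conGen (fun u v : FreeMonoid ↥S =>
        FreeMonoid.toList v = N (FreeMonoid.toList u) ∨ (u = FreeMonoid.of e ∧ v = 1)) u v →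
    Phi N e (FreeMonoid.toList u) = Phi N e (FreeMonoid.toList v) := by
  intro u v h
  have h' : ConGen.Rel _ u v := h
  clear h
  induction h' with
  | of u v huv =>
      rcases huv with h1 | ⟨h1, h2⟩
      · rw [h1, phi_norm hQ hNeu]
      · subst h1; subst h2
        rw [show FreeMonoid.toList (FreeMonoid.of e) = [e] from rfl,
          show FreeMonoid.toList (1 : FreeMonoid ↥S) = [] from rfl,
          phi_e_singleton hQ hNeu hPres, phi_nil hQ hNeu]
  | refl x => rfl
  | symm _ ih => exact ih.symm
  | trans _ _ ih1 ih2 => exact ih1.trans ih2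
  | mul h1 h2 ih1 ih2 =>
      simp only [FreeMonoid.toList_mul]
      rw [← phi_phi_left hQ hNeu, ← phi_phi_right hQ hNeu, ih1, ih2,
        phi_phi_right hQ hNeu, phi_phi_left hQ hNeu]

theorem pi_inj {l l' : List ↥S} (h : (evList l : M) = evList l') :
    Phi N e l = Phi N e l' := by
  have h2 := (hPres.2 (FreeMonoid.ofList l) (FreeMonoid.ofList l')).mp
    (by rw [lift_ofList, lift_ofList]; exact h)
  have h3 := phi_invariant hQ hNeu hPres _ _ h2
  simpa using h3

end MonoidLayer

/-- normal form of a monoid element -/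
noncomputable def NF {M : Type*} [Monoid M] {S : Set M} (N : List ↥S → List ↥S) (e : ↥S)
    (hPres : PresentedModE S N e) (f : M) : List ↥S :=
  Phi N e (FreeMonoid.toList (Classical.choose (hPres.1 f)))

section NFLemmas
set_option linter.unusedSectionVars false
variable {M : Type*} [Monoid M] {S : Set M} {N : List ↥S → List ↥S} {e : ↥S}
variable (hQ : QuadraticNormalisation N) (h3 : RightClass N 3) (hNeu : Neutral N e)
variable (hPres : PresentedModE S N e)
include hQ hNeu hPres

theorem pi_NF (f : M) : evList (NF N e hPres f) = f := by
  unfold NF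
  rw [pi_phi hQ hNeu hPres, evList_toList]
  exact Classical.choose_spec (hPres.1 f)

theorem NF_unique {f : M} {l : List ↥S} (h : evList l = f) : NF N e hPres f = Phi N e l := by
  unfold NF
  apply pi_inj hQ hNeu hPres
  rw [h, evList_toList, Classical.choose_spec (hPres.1 f)]

theorem NF_good (f : M) : Good N e (NF N e hPres f) := by
  unfold NF; exact good_phi hQ hNeu _

theorem NF_one : NF N e hPres (1 : M) = [] := by
  rw [NF_unique hQ hNeu hPres (evList_nil), phi_nil hQ hNeu]

theorem NF_good_eval {l : List ↥S} (h : Good N e l) : NF N e hPres (evList l : M) = l := by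
  rw [NF_unique hQ hNeu hPres rfl, good_eq h]

theorem NF_mul (f g : M) :
    NF N e hPres (f * g) = Phi N e (NF N e hPres f ++ NF N e hPres g) := by
  apply NF_unique hQ hNeu hPres
  rw [evList_append, pi_NF hQ hNeu hPres, pi_NF hQ hNeu hPres]

theorem NF_ne_nil {f : M} (h : f ≠ 1) : NF N e hPres f ≠ [] := by
  intro hc
  apply h
  rw [← pi_NF hQ hNeu hPres f, hc, evList_nil]

theorem lenS_eq_NF (f : M) : lenS S f = (NF N e hPres f).length := by
  have hmem : (NF N e hPres f).length ∈
      {n | ∃ l : List M, l.length = n ∧ (∀ x ∈ l, x ∈ S) ∧ l.prod = f} := by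
    refine ⟨(NF N e hPres f).map Subtype.val, by simp, ?_, ?_⟩
    · intro x hx
      obtain ⟨s, hs, rfl⟩ := List.mem_map.mp hx
      exact s.2
    · rw [← evList_eq, pi_NF hQ hNeu hPres]
  apply le_antisymm
  · exact Nat.sInf_le hmem
  · apply le_csInf ⟨_, hmem⟩
    rintro n ⟨l, hlen, hmemS, hprod⟩
    have exl : ∀ l : List M, (∀ x ∈ l, x ∈ S) →
        ∃ l' : List ↥S, l'.length = l.length ∧ evList l' = l.prod := by
      intro l
      induction l with
      | nil => exact fun _ => ⟨[], rfl, by simp [evList_eq]⟩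
      | cons a l ihl =>
          intro hmem2
          obtain ⟨l', h1, h2⟩ := ihl (fun x hx => hmem2 x (List.mem_cons_of_mem a hx))
          refine ⟨⟨a, hmem2 a List.mem_cons_self⟩ :: l', by simp [h1], ?_⟩
          rw [evList_eq] at h2 ⊢
          rw [List.map_cons, List.prod_cons, List.prod_cons, h2]
    obtain ⟨l', hlenl', hev⟩ := exl l hmemS
    rw [hprod] at hev
    have h1 : NF N e hPres f = Phi N e l' := NF_unique hQ hNeu hPres hev
    have h2 := phi_length_le (e := e) hQ hNeu l'
    have h1l : (NF N e hPres f).length = (Phi N e l').length := by rw [h1]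
    omega

theorem lenS_good {l : List ↥S} (h : Good N e l) : lenS S (evList l : M) = l.length := by
  rw [lenS_eq_NF hQ hNeu hPres, NF_good_eval hQ hNeu hPres h]

include h3 in
theorem lenS_mul_le (f g : M) : lenS S (f * g) ≤ lenS S f + lenS S g := by
  rw [lenS_eq_NF hQ hNeu hPres (f*g), lenS_eq_NF hQ hNeu hPres f,
    lenS_eq_NF hQ hNeu hPres g, NF_mul hQ hNeu hPres]
  have := phi_append_length (e := e) hQ h3 hNeu (NF N e hPres f) (NF N e hPres g)
  exact this

end NFLemmas
end QNF
namespace QNF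
section Eta
set_option linter.unusedSectionVars false
variable {M : Type*} [Monoid M] {S : Set M} {N : List ↥S → List ↥S} {e : ↥S}

/-- the factorisation map derived from the normalisation -/
noncomputable def etaF (N : List ↥S → List ↥S) (e : ↥S) (hPres : PresentedModE S N e)
    (f : M) : M × M :=
  (evList ((NF N e hPres f).take 1), evList ((NF N e hPres f).drop 1))

variable (hQ : QuadraticNormalisation N) (h3 : RightClass N 3) (hNeu : Neutral N e)
variable (hPres : PresentedModE S N e)
include hQ h3 hNeu hPres

theorem eta_mul_eval {c d : List ↥S} (hc : Good N e c) (hd : Good N e d) :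
    etaF N e hPres (evList c * evList d) =
      (evList ((Phi N e (c ++ d)).take 1), evList ((Phi N e (c ++ d)).drop 1)) := by
  unfold etaF
  rw [show NF N e hPres (evList c * evList d) = Phi N e (c ++ d) from by
    rw [NF_mul hQ hNeu hPres, NF_good_eval hQ hNeu hPres hc, NF_good_eval hQ hNeu hPres hd]]

theorem tripLen_eval {a b c : List ↥S} (ha : Good N e a) (hb : Good N e b)
    (hc : Good N e c) :
    tripLen S ((evList a : M), (evList b : M), (evList c : M)) =
      a.length + b.length + c.length := by
  unfold tripLen
  rw [show ((evList a : M), (evList b : M), (evList c : M)).1 = evList a from rfl]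
  rw [show ((evList a : M), (evList b : M), (evList c : M)).2.1 = evList b from rfl]
  rw [show ((evList a : M), (evList b : M), (evList c : M)).2.2 = evList c from rfl]
  rw [lenS_good hQ hNeu hPres ha, lenS_good hQ hNeu hPres hb, lenS_good hQ hNeu hPres hc]

theorem axm_main (x : M × M × M) :
    (C2121 (fun p : M × M => etaF N e hPres (p.1 * p.2)) x =
        C212 (fun p : M × M => etaF N e hPres (p.1 * p.2)) x ∧
      C1212 (fun p : M × M => etaF N e hPres (p.1 * p.2)) x =
        C212 (fun p : M × M => etaF N e hPres (p.1 * p.2)) x) ∨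
    (tripLen S (C2121 (fun p : M × M => etaF N e hPres (p.1 * p.2)) x) < tripLen S x ∧
      tripLen S (C212 (fun p : M × M => etaF N e hPres (p.1 * p.2)) x) < tripLen S x ∧
      tripLen S (C1212 (fun p : M × M => etaF N e hPres (p.1 * p.2)) x) < tripLen S x) := by
  obtain ⟨f₁, f₂, f₃⟩ := x
  set F : M × M → M × M := fun p => etaF N e hPres (p.1 * p.2) with hF
  obtain ⟨u, hu⟩ : ∃ u, NF N e hPres f₁ = u := ⟨_, rfl⟩
  obtain ⟨v, hv⟩ : ∃ v, NF N e hPres f₂ = v := ⟨_, rfl⟩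
  obtain ⟨w, hw⟩ : ∃ w, NF N e hPres f₃ = w := ⟨_, rfl⟩
  have hgu : Good N e u := hu ▸ NF_good hQ hNeu hPres f₁
  have hgv : Good N e v := hv ▸ NF_good hQ hNeu hPres f₂
  have hgw : Good N e w := hw ▸ NF_good hQ hNeu hPres f₃
  have hf1 : evList u = f₁ := hu ▸ pi_NF hQ hNeu hPres f₁
  have hf2 : evList v = f₂ := hv ▸ pi_NF hQ hNeu hPres f₂
  have hf3 : evList w = f₃ := hw ▸ pi_NF hQ hNeu hPres f₃
  -- the words appearing along the computations
  obtain ⟨p, hp⟩ : ∃ p, Phi N e (v ++ w) = p := ⟨_, rfl⟩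
  obtain ⟨q, hq⟩ : ∃ q, Phi N e (u ++ p.take 1) = q := ⟨_, rfl⟩
  obtain ⟨t, ht⟩ : ∃ t, Phi N e (q.drop 1 ++ p.drop 1) = t := ⟨_, rfl⟩
  obtain ⟨P, hP⟩ : ∃ P, Phi N e (u ++ v) = P := ⟨_, rfl⟩
  obtain ⟨Q, hQ'⟩ : ∃ Q, Phi N e (P.drop 1 ++ w) = Q := ⟨_, rfl⟩
  obtain ⟨R, hR⟩ : ∃ R, Phi N e (P.take 1 ++ Q.take 1) = R := ⟨_, rfl⟩
  obtain ⟨T, hT⟩ : ∃ T, Phi N e (R.drop 1 ++ Q.drop 1) = T := ⟨_, rfl⟩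
  obtain ⟨z, hz⟩ : ∃ z, NF N e hPres (f₁ * f₂ * f₃) = z := ⟨_, rfl⟩
  have hgp : Good N e p := hp ▸ good_phi hQ hNeu _
  have hgq : Good N e q := hq ▸ good_phi hQ hNeu _
  have hgt : Good N e t := ht ▸ good_phi hQ hNeu _
  have hgP : Good N e P := hP ▸ good_phi hQ hNeu _
  have hgQ : Good N e Q := hQ' ▸ good_phi hQ hNeu _
  have hgR : Good N e R := hR ▸ good_phi hQ hNeu _
  have hgT : Good N e T := hT ▸ good_phi hQ hNeu _
  have hgz : Good N e z := hz ▸ NF_good hQ hNeu hPres _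
  -- z as Phi of the two relevant concatenations
  have hz1 : z = Phi N e (u ++ p) := by
    rw [← hz, ← hp, phi_phi_right hQ hNeu u (v ++ w)]
    apply NF_unique hQ hNeu hPres
    rw [evList_append, evList_append, hf1, hf2, hf3]
    exact (mul_assoc f₁ f₂ f₃).symm
  have hz2 : z = Phi N e (P.take 1 ++ Q) := by
    rw [← hz, ← hQ', phi_phi_right hQ hNeu (P.take 1) (P.drop 1 ++ w),
      ← List.append_assoc, List.take_append_drop, ← hP,
      phi_phi_left hQ hNeu (u ++ v) w]
    apply NF_unique hQ hNeu hPres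
    rw [evList_append, evList_append, hf1, hf2, hf3]
  -- evaluation of the three composites
  have hC212 : C212 F (f₁, f₂, f₃) =
      ((evList (q.take 1) : M), (evList (t.take 1) : M), (evList (t.drop 1) : M)) := by
    show app2 F (app1 F (app2 F (f₁, f₂, f₃))) = _
    have s1 : app2 F (f₁, f₂, f₃) = (f₁, evList (p.take 1), evList (p.drop 1)) := by
      show (f₁, (F (f₂, f₃)).1, (F (f₂, f₃)).2) = _
      have : F (f₂, f₃) = (evList (p.take 1), evList (p.drop 1)) := by
        show etaF N e hPres (f₂ * f₃) = _
        rw [← hf2, ← hf3, eta_mul_eval hQ h3 hNeu hPres hgv hgw, hp]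
      rw [this]
    have s2 : app1 F (f₁, evList (p.take 1), evList (p.drop 1)) =
        ((evList (q.take 1) : M), evList (q.drop 1), evList (p.drop 1)) := by
      show ((F (f₁, evList (p.take 1))).1, (F (f₁, evList (p.take 1))).2,
        evList (p.drop 1)) = _
      have : F (f₁, evList (p.take 1)) = (evList (q.take 1), evList (q.drop 1)) := by
        show etaF N e hPres (f₁ * evList (p.take 1)) = _
        rw [← hf1, eta_mul_eval hQ h3 hNeu hPres hgu (good_take1 hQ hNeu hgp), hq]
      rw [this]
    have s3 : app2 F ((evList (q.take 1) : M), evList (q.drop 1), evList (p.drop 1)) =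
        ((evList (q.take 1) : M), evList (t.take 1), evList (t.drop 1)) := by
      show ((evList (q.take 1) : M), (F (evList (q.drop 1), evList (p.drop 1))).1,
        (F (evList (q.drop 1), evList (p.drop 1))).2) = _
      have : F (evList (q.drop 1), evList (p.drop 1)) =
          (evList (t.take 1), evList (t.drop 1)) := by
        show etaF N e hPres (evList (q.drop 1) * evList (p.drop 1)) = _
        rw [eta_mul_eval hQ h3 hNeu hPres (good_drop1 hQ hNeu hgq)
          (good_drop1 hQ hNeu hgp), ht]
      rw [this]
    rw [s1, s2, s3]
  obtain ⟨y2, hy2⟩ : ∃ y2, Phi N e (q.take 1 ++ t.take 1) = y2 := ⟨_, rfl⟩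
  have hgy2 : Good N e y2 := hy2 ▸ good_phi hQ hNeu _
  have hC2121 : C2121 F (f₁, f₂, f₃) =
      ((evList (y2.take 1) : M), (evList (y2.drop 1) : M), (evList (t.drop 1) : M)) := by
    show app1 F (C212 F (f₁, f₂, f₃)) = _
    rw [hC212]
    show ((F (evList (q.take 1), evList (t.take 1))).1,
      (F (evList (q.take 1), evList (t.take 1))).2, (evList (t.drop 1) : M)) = _
    have : F (evList (q.take 1), evList (t.take 1)) =
        (evList (y2.take 1), evList (y2.drop 1)) := by
      show etaF N e hPres (evList (q.take 1) * evList (t.take 1)) = _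
      rw [eta_mul_eval hQ h3 hNeu hPres (good_take1 hQ hNeu hgq)
        (good_take1 hQ hNeu hgt), hy2]
    rw [this]
  have hC1212 : C1212 F (f₁, f₂, f₃) =
      ((evList (R.take 1) : M), (evList (T.take 1) : M), (evList (T.drop 1) : M)) := by
    show app2 F (app1 F (app2 F (app1 F (f₁, f₂, f₃)))) = _
    have s1 : app1 F (f₁, f₂, f₃) = (evList (P.take 1), evList (P.drop 1), f₃) := by
      show ((F (f₁, f₂)).1, (F (f₁, f₂)).2, f₃) = _
      have : F (f₁, f₂) = (evList (P.take 1), evList (P.drop 1)) := by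
        show etaF N e hPres (f₁ * f₂) = _
        rw [← hf1, ← hf2, eta_mul_eval hQ h3 hNeu hPres hgu hgv, hP]
      rw [this]
    have s2 : app2 F ((evList (P.take 1) : M), evList (P.drop 1), f₃) =
        ((evList (P.take 1) : M), evList (Q.take 1), evList (Q.drop 1)) := by
      show ((evList (P.take 1) : M), (F (evList (P.drop 1), f₃)).1,
        (F (evList (P.drop 1), f₃)).2) = _
      have : F (evList (P.drop 1), f₃) = (evList (Q.take 1), evList (Q.drop 1)) := by
        show etaF N e hPres (evList (P.drop 1) * f₃) = _
        rw [← hf3, eta_mul_eval hQ h3 hNeu hPres (good_drop1 hQ hNeu hgP) hgw, hQ']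
      rw [this]
    have s3 : app1 F ((evList (P.take 1) : M), evList (Q.take 1), evList (Q.drop 1)) =
        ((evList (R.take 1) : M), evList (R.drop 1), evList (Q.drop 1)) := by
      show ((F (evList (P.take 1), evList (Q.take 1))).1,
        (F (evList (P.take 1), evList (Q.take 1))).2, (evList (Q.drop 1) : M)) = _
      have : F (evList (P.take 1), evList (Q.take 1)) =
          (evList (R.take 1), evList (R.drop 1)) := by
        show etaF N e hPres (evList (P.take 1) * evList (Q.take 1)) = _
        rw [eta_mul_eval hQ h3 hNeu hPres (good_take1 hQ hNeu hgP)
          (good_take1 hQ hNeu hgQ), hR]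
      rw [this]
    have s4 : app2 F ((evList (R.take 1) : M), evList (R.drop 1), evList (Q.drop 1)) =
        ((evList (R.take 1) : M), evList (T.take 1), evList (T.drop 1)) := by
      show ((evList (R.take 1) : M), (F (evList (R.drop 1), evList (Q.drop 1))).1,
        (F (evList (R.drop 1), evList (Q.drop 1))).2) = _
      have : F (evList (R.drop 1), evList (Q.drop 1)) =
          (evList (T.take 1), evList (T.drop 1)) := by
        show etaF N e hPres (evList (R.drop 1) * evList (Q.drop 1)) = _
        rw [eta_mul_eval hQ h3 hNeu hPres (good_drop1 hQ hNeu hgR)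
          (good_drop1 hQ hNeu hgQ), hT]
      rw [this]
    rw [s1, s2, s3, s4]
  -- length bookkeeping
  have htripx : tripLen S (f₁, f₂, f₃) = u.length + v.length + w.length := by
    rw [← hf1, ← hf2, ← hf3]
    exact tripLen_eval hQ h3 hNeu hPres hgu hgv hgw
  have hplen : p.length ≤ v.length + w.length := by
    rw [← hp]; exact phi_append_length hQ h3 hNeu v w
  have hPlen : P.length ≤ u.length + v.length := by
    rw [← hP]; exact phi_append_length hQ h3 hNeu u v
  have hzlen1 : z.length ≤ u.length + p.length := by
    rw [hz1]; exact phi_append_length hQ h3 hNeu u p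
  have hqlen : q.length ≤ u.length + (p.take 1).length := by
    rw [← hq]; exact phi_append_length hQ h3 hNeu u (p.take 1)
  -- the two instances of the master lemma
  have mlA := ml hQ h3 hNeu p hgp u hgu q t z (by rw [hq]) (by rw [ht]) hz1
  have mlB := ml hQ h3 hNeu Q hgQ (P.take 1) (good_take1 hQ hNeu hgP) R T z
    (by rw [hR]) (by rw [hT]) hz2
  by_cases hmn : z.length = u.length + v.length + w.length
  · -- all three composites coincide
    left
    by_cases hn0 : u.length + v.length + w.length = 0
    · -- completely degenerate case
      have hu0 : u = [] := List.length_eq_zero_iff.mp (by omega)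
      have hv0 : v = [] := List.length_eq_zero_iff.mp (by omega)
      have hw0 : w = [] := List.length_eq_zero_iff.mp (by omega)
      have hp0 : p = [] := by rw [← hp, hv0, hw0]; exact phi_nil hQ hNeu
      have hq0 : q = [] := by rw [← hq, hu0, hp0]; exact phi_nil hQ hNeu
      have ht0 : t = [] := by rw [← ht, hq0, hp0]; exact phi_nil hQ hNeu
      have hy20 : y2 = [] := by rw [← hy2, hq0, ht0]; exact phi_nil hQ hNeu
      have hP0 : P = [] := by rw [← hP, hu0, hv0]; exact phi_nil hQ hNeu
      have hQ0 : Q = [] := by rw [← hQ', hP0, hw0]; exact phi_nil hQ hNeu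
      have hR0 : R = [] := by rw [← hR, hP0, hQ0]; exact phi_nil hQ hNeu
      have hT0 : T = [] := by rw [← hT, hR0, hQ0]; exact phi_nil hQ hNeu
      constructor
      · rw [hC2121, hC212, hy20, ht0, hq0]
        rfl
      · rw [hC1212, hC212, hR0, hT0, ht0, hq0]
    · -- nondegenerate : everything is determined by z
      have hplen2 : p.length = v.length + w.length := by
        have h1 := (List.length_take : (p.take 1).length = _)
        omega
      -- the first master lemma must be in its first case
      have hA : z = q.take 1 ++ t := by
        rcases mlA with h | ⟨h1, _⟩
        · exact h
        · omega
      have hqne : q ≠ [] := by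
        intro hq0
        have ht' : t = p.drop 1 := by
          rw [← ht, hq0, List.drop_nil, List.nil_append,
            good_eq (good_drop1 hQ hNeu hgp)]
        have hzt : z = t := by rw [hA, hq0, List.take_nil, List.nil_append]
        have h1 : (p.drop 1).length = p.length - 1 := List.length_drop
        have h2 : z.length = t.length := by rw [hzt]
        have h3' : t.length = (p.drop 1).length := by rw [ht']
        omega
      obtain ⟨q₁, qr, hqcons⟩ := List.exists_cons_of_ne_nil hqne
      have hqtake : q.take 1 = [q₁] := by rw [hqcons]; rfl
      have hzcons : z = q₁ :: t := by rw [hA, hqtake]; rfl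
      constructor
      · -- C2121 = C212
        rw [hC2121, hC212]
        cases t with
        | nil =>
            have hy2' : y2 = [q₁] := by
              rw [← hy2, List.take_nil, List.append_nil,
                good_eq (good_take1 hQ hNeu hgq)]
              exact hqtake
            rw [hy2', hqtake]
            rfl
        | cons t₁ tr =>
            have hzc : z = q₁ :: t₁ :: tr := hzcons
            have hpair : N [q₁, t₁] = [q₁, t₁] :=
              factor_normal hQ (good_norm hQ hNeu hgz) (u := []) (v := tr) (by rw [hzc]; rfl)
            have hq1e : q₁ ≠ e := by
              intro hc
              exact good_not_mem hQ hNeu hgz (by rw [hzc, hc]; simp)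
            have ht1e : t₁ ≠ e := by
              intro hc
              exact good_not_mem hQ hNeu hgz (by rw [hzc, hc]; simp)
            have hy2' : y2 = [q₁, t₁] := by
              rw [← hy2, hqtake, show (t₁ :: tr).take 1 = [t₁] from rfl]
              show Phi N e [q₁, t₁] = [q₁, t₁]
              unfold Phi
              rw [hpair, removeE_cons_ne hq1e, removeE_cons_ne ht1e, removeE_nil]
            rw [hy2', hqtake]
            rfl
      · -- C1212 = C212
        rw [hC1212, hC212]
        have hz3 : z = Phi N e (P ++ w) := by
          rw [← hz, ← hP, phi_phi_left hQ hNeu (u ++ v) w]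
          apply NF_unique hQ hNeu hPres
          rw [evList_append, evList_append, hf1, hf2, hf3]
        have hz3len : z.length ≤ P.length + w.length := by
          rw [hz3]; exact phi_append_length hQ h3 hNeu P w
        have hPlen2 : P.length = u.length + v.length := by omega
        have hQlen : Q.length ≤ (P.drop 1).length + w.length := by
          rw [← hQ']; exact phi_append_length hQ h3 hNeu _ w
        have hPdrop : (P.drop 1).length = P.length - 1 := List.length_drop
        have hPtake : (P.take 1).length = min 1 P.length := List.length_take
        have hminP := min1_add_drop1 P
        have hB : z = R.take 1 ++ T := by
          rcases mlB with h | ⟨h1, -⟩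
          · exact h
          · exfalso
            omega
        have hRne : R ≠ [] := by
          intro hR0
          have hT' : T = Q.drop 1 := by
            rw [← hT, hR0, List.drop_nil, List.nil_append,
              good_eq (good_drop1 hQ hNeu hgQ)]
          have hzT : z = T := by rw [hB, hR0, List.take_nil, List.nil_append]
          have h1 : (Q.drop 1).length = Q.length - 1 := List.length_drop
          have h2 : z.length = T.length := by rw [hzT]
          have h3' : T.length = (Q.drop 1).length := by rw [hT']
          omega
        obtain ⟨R₁, Rr, hRcons⟩ := List.exists_cons_of_ne_nil hRne
        have hRtake : R.take 1 = [R₁] := by rw [hRcons]; rfl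
        have hzcons2 : z = R₁ :: T := by rw [hB, hRtake]; rfl
        have hinj : q₁ = R₁ ∧ t = T := by
          have h := hzcons.symm.trans hzcons2
          exact ⟨by injection h, by injection h⟩
        rw [hRtake, hqtake, hinj.1, hinj.2]
  · -- some length decreases : all three composites decrease the total length
    right
    have hzn : z.length < u.length + v.length + w.length := by
      have : z.length ≤ u.length + v.length + w.length := by omega
      omega
    -- generic take/drop length facts
    have aq : (q.take 1).length + (q.drop 1).length = q.length := by
      rw [← List.length_append, List.take_append_drop]
    have aq2 : (q.take 1).length ≤ 1 := by
      rw [List.length_take]; exact min_le_left _ _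
    have at1 : (t.take 1).length + (t.drop 1).length = t.length := by
      rw [← List.length_append, List.take_append_drop]
    have at2 : (t.take 1).length ≤ 1 := by
      rw [List.length_take]; exact min_le_left _ _
    have aP : (P.take 1).length + (P.drop 1).length = P.length := by
      rw [← List.length_append, List.take_append_drop]
    have aP2 : (P.take 1).length ≤ 1 := by
      rw [List.length_take]; exact min_le_left _ _
    have aT : (T.take 1).length + (T.drop 1).length = T.length := by
      rw [← List.length_append, List.take_append_drop]
    have aT2 : (T.take 1).length ≤ 1 := by
      rw [List.length_take]; exact min_le_left _ _
    have aR : (R.take 1).length + (R.drop 1).length = R.length := by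
      rw [← List.length_append, List.take_append_drop]
    have ay : (y2.take 1).length + (y2.drop 1).length = y2.length := by
      rw [← List.length_append, List.take_append_drop]
    -- min-facts to interface with the master lemma
    have mq : min 1 q.length = (q.take 1).length := List.length_take.symm
    have mt : min 1 t.length = (t.take 1).length := List.length_take.symm
    have mR : min 1 R.length = (R.take 1).length := List.length_take.symm
    have mP : min 1 P.length = (P.take 1).length := List.length_take.symm
    have hy2len : y2.length ≤ (q.take 1).length + (t.take 1).length := by
      rw [← hy2]; exact phi_append_length hQ h3 hNeu _ _
    have hQlen : Q.length ≤ (P.drop 1).length + w.length := by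
      rw [← hQ']; exact phi_append_length hQ h3 hNeu _ w
    have hPdrop : (P.drop 1).length = P.length - 1 := List.length_drop
    -- tripLen of the three composite values
    have e212 : tripLen S (C212 F (f₁, f₂, f₃)) =
        (q.take 1).length + (t.take 1).length + (t.drop 1).length := by
      rw [hC212]
      exact tripLen_eval hQ h3 hNeu hPres (good_take1 hQ hNeu hgq)
        (good_take1 hQ hNeu hgt) (good_drop1 hQ hNeu hgt)
    have e2121 : tripLen S (C2121 F (f₁, f₂, f₃)) =
        (y2.take 1).length + (y2.drop 1).length + (t.drop 1).length := by
      rw [hC2121]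
      exact tripLen_eval hQ h3 hNeu hPres (good_take1 hQ hNeu hgy2)
        (good_drop1 hQ hNeu hgy2) (good_drop1 hQ hNeu hgt)
    have e1212 : tripLen S (C1212 F (f₁, f₂, f₃)) =
        (R.take 1).length + (T.take 1).length + (T.drop 1).length := by
      rw [hC1212]
      exact tripLen_eval hQ h3 hNeu hPres (good_take1 hQ hNeu hgR)
        (good_take1 hQ hNeu hgT) (good_drop1 hQ hNeu hgT)
    have b212 : (q.take 1).length + (t.take 1).length + (t.drop 1).length <
        u.length + v.length + w.length := by
      rcases mlA with h | ⟨-, h2⟩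
      · have : z.length = (q.take 1).length + t.length := by
          rw [h, List.length_append]
        omega
      · omega
    have b1212 : (R.take 1).length + (T.take 1).length + (T.drop 1).length <
        u.length + v.length + w.length := by
      rcases mlB with h | ⟨-, h2⟩
      · have : z.length = (R.take 1).length + T.length := by
          rw [h, List.length_append]
        omega
      · have hPQbound : (P.take 1).length + Q.length ≤ P.length + w.length := by omega
        omega
    refine ⟨?_, ?_, ?_⟩
    · rw [e2121, htripx]; omega
    · rw [e212, htripx]; exact b212
    · rw [e1212, htripx]; exact b1212

end Eta
end QNF
namespace QNF
section Final
set_option linter.unusedSectionVars false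
variable {M : Type*} [Monoid M] {S : Set M} {N : List ↥S → List ↥S} {e : ↥S}
variable (hQ : QuadraticNormalisation N) (h3 : RightClass N 3) (hNeu : Neutral N e)
variable (hPres : PresentedModE S N e)
include hQ h3 hNeu hPres

theorem etaF_one : etaF N e hPres (1 : M) = (1, 1) := by
  unfold etaF
  rw [NF_one hQ hNeu hPres]
  rw [List.take_nil, List.drop_nil, evList_nil]

theorem fact_main : Factorability S (etaF N e hPres (M := M)) := by
  constructor
  · -- gen
    intro f
    refine ⟨(NF N e hPres f).map Subtype.val, ?_, ?_⟩
    · intro x hx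
      obtain ⟨s, hs, rfl⟩ := List.mem_map.mp hx
      exact s.2
    · rw [← evList_eq, pi_NF hQ hNeu hPres]
  · -- one_mem
    have h := e.2
    rwa [coe_e_eq_one hQ hNeu hPres] at h
  · -- eta_one
    exact etaF_one hQ h3 hNeu hPres
  · -- head_mem
    intro f hf
    obtain ⟨s, r, hsr⟩ := List.exists_cons_of_ne_nil (NF_ne_nil hQ hNeu hPres hf)
    have h1 : (etaF N e hPres f).1 = (s : M) := by
      unfold etaF
      rw [hsr, show (s :: r).take 1 = [s] from rfl, evList_singleton]
    constructor
    · rw [h1]; exact s.2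
    · rw [h1]
      intro hc
      have hse : s ≠ e := by
        intro hse
        exact good_not_mem hQ hNeu (NF_good hQ hNeu hPres f) (by rw [hsr, hse]; simp)
      apply hse
      apply Subtype.coe_injective
      exact hc.trans (coe_e_eq_one hQ hNeu hPres).symm
  · -- split
    intro f _
    unfold etaF
    rw [show ((evList ((NF N e hPres f).take 1) : M), (evList ((NF N e hPres f).drop 1) : M)).1
      = evList ((NF N e hPres f).take 1) from rfl]
    rw [show ((evList ((NF N e hPres f).take 1) : M), (evList ((NF N e hPres f).drop 1) : M)).2
      = evList ((NF N e hPres f).drop 1) from rfl]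
    rw [← evList_append, List.take_append_drop, pi_NF hQ hNeu hPres]
  · -- geodesic
    intro f _
    unfold etaF
    rw [show ((evList ((NF N e hPres f).take 1) : M), (evList ((NF N e hPres f).drop 1) : M)).1
      = evList ((NF N e hPres f).take 1) from rfl]
    rw [show ((evList ((NF N e hPres f).take 1) : M), (evList ((NF N e hPres f).drop 1) : M)).2
      = evList ((NF N e hPres f).drop 1) from rfl]
    rw [lenS_good hQ hNeu hPres (good_take1 hQ hNeu (NF_good hQ hNeu hPres f)),
      lenS_good hQ hNeu hPres (good_drop1 hQ hNeu (NF_good hQ hNeu hPres f)),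
      lenS_eq_NF hQ hNeu hPres f, ← List.length_append, List.take_append_drop]
  · -- axm
    exact axm_main hQ h3 hNeu hPres

end Final
end QNF

/-- if `(S, N)` is a quadratic normalisation of class `(4,3)` mod
`e` for a monoid `M`, then `M` is factorable: the map `η_N` derived from `N`
(sending `1 ↦ (1,1)` and `f ≠ 1` to `(s₁, ev(s₂,…,sₙ))` where `s₁|⋯|sₙ` is the
`N`-normal word with `e`'s removed representing `f`) is a factorability
structure on `(M, S)`. -/
theorem class43_gives_factorable {M : Type*} [Monoid M] (S : Set M)
    (N : List ↥S → List ↥S) (e : ↥S)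
    (hQ : QuadraticNormalisation N) (hNeu : Neutral N e)
    (hPres : PresentedModE S N e) (h43 : IsClass N 4 3) :
    ∃ eta : M → M × M, Factorability S eta ∧ eta 1 = (1, 1) ∧
      ∀ f : M, f ≠ 1 → ∀ w : List ↥S, evList w = f →
        ∃ (s : ↥S) (rest : List ↥S),
          removeE e (N w) = s :: rest ∧ eta f = ((s : M), evList rest) := by
  obtain ⟨-, h3⟩ := h43
  refine ⟨QNF.etaF N e hPres, QNF.fact_main hQ h3 hNeu hPres,
    QNF.etaF_one hQ h3 hNeu hPres, ?_⟩
  intro f hf w hw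
  have hNFw : QNF.NF N e hPres f = QNF.Phi N e w := QNF.NF_unique hQ hNeu hPres hw
  obtain ⟨s, rest, hsr⟩ := List.exists_cons_of_ne_nil (QNF.NF_ne_nil hQ hNeu hPres hf)
  refine ⟨s, rest, ?_, ?_⟩
  · rw [show removeE e (N w) = QNF.Phi N e w from rfl, ← hNFw, hsr]
  · unfold QNF.etaF
    rw [hsr, show (s :: rest).take 1 = [s] from rfl,
      show (s :: rest).drop 1 = rest from rfl, QNF.evList_singleton]
end

section
/- Let (S, N) be a left-weighted quadratic normalisation of class (4,3) mod 1 for a left-cancellative monoid M containing no nontrivial invertible element. Then the associated factorability structure η satisfies, for all s ∈ S∖{1} and f ∈ M: (sf)′ = (s·f′)′ and the right complement of (sf)′ in sf equals the right complement of (sf′)′ in sf′ multiplied by the right complement of f′ in f. -/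
/-!
Right class 3 amounts to the domino rule: if `q₁|⋯|qₙ` is the `e`-free normal form of `f` and
`N(s|q₁) = s₁|t₁`, then the normal form of `sf` is `s₁` followed by a normal form of
`t₁q₂⋯qₙ` (induction on `n`). Hence `(sf)′ = s₁ = (sf′)′` and
`\overline{sf} = t₁ · q₂⋯qₙ = \overline{sf′} · f̄`. Neutrality of `e` and the absence
of nontrivial invertible elements keep `e` out of the new first letters.
-/

section RemoveE

variable {A : Type*} (e : A)

open Classical in
lemma removeE_cons (a : A) (w : List A) :
    removeE e (a :: w) = if a = e then removeE e w else a :: removeE e w := by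
  rw [removeE]

lemma removeE_sublist (w : List A) : (removeE e w).Sublist w := by
  induction w with
  | nil => exact List.Sublist.slnil
  | cons a w ih =>
    rw [removeE_cons]
    split_ifs
    exacts [ih.cons a, ih.cons_cons a]

lemma not_mem_removeE (w : List A) : e ∉ removeE e w := by
  induction w with
  | nil => exact List.not_mem_nil
  | cons a w ih =>
    rw [removeE_cons]
    split_ifs with ha
    · exact ih
    · exact List.not_mem_cons_of_ne_of_not_mem (Ne.symm ha) ih

lemma removeE_eq_self {w : List A} (hw : e ∉ w) : removeE e w = w := by
  induction w with
  | nil => rfl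
  | cons a w ih =>
    rw [List.mem_cons, not_or] at hw
    rw [removeE_cons, if_neg (Ne.symm hw.1), ih hw.2]

lemma length_removeE_lt {w : List A} (hw : e ∈ w) : (removeE e w).length < w.length := by
  by_contra! hle
  have := (removeE_sublist e w).eq_of_length_le hle
  exact not_mem_removeE e w (by rwa [this])

end RemoveE

namespace QuadraticNormalisation

variable {A : Type*} {N : List A → List A}

lemma N_N (hQ : QuadraticNormalisation N) (w : List A) : N (N w) = N w := by
  simpa using (hQ.mid [] w []).symm

lemma pair_normal (hQ : QuadraticNormalisation N) {w u v : List A} {a b : A} (hw : N w = w)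
    (h : w = u ++ a :: b :: v) : N [a, b] = [a, b] :=
  (hQ.normal_iff w).mp hw u v a b h

lemma exists_eq_pair (hQ : QuadraticNormalisation N) (a b : A) : ∃ c d, N [a, b] = [c, d] :=
  List.length_eq_two.mp ((hQ.len _).trans rfl)

lemma normal_of_normal_cons (hQ : QuadraticNormalisation N) {a : A} {w : List A}
    (hw : N (a :: w) = a :: w) : N w = w :=
  (hQ.normal_iff w).mpr fun u v b c h => hQ.pair_normal (u := a :: u) hw (by rw [h]; rfl)

lemma normal_cons_cons (hQ : QuadraticNormalisation N) {a b : A} {w : List A}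
    (hab : N [a, b] = [a, b]) (hw : N (b :: w) = b :: w) : N (a :: b :: w) = a :: b :: w := by
  refine (hQ.normal_iff _).mpr fun u v x y h => ?_
  cases u with
  | nil =>
    obtain ⟨rfl, rfl, -⟩ : a = x ∧ b = y ∧ w = v := by simpa using h
    exact hab
  | cons _ u => exact hQ.pair_normal hw (List.cons.inj h).2

lemma eq_of_normal_neutral_pair (hQ : QuadraticNormalisation N) {e x : A} (hNeu : Neutral N e)
    (h : N [e, x] = [e, x]) : x = e := by
  have := (hNeu [x]).2
  rw [hQ.letter, h] at this
  exact (List.cons.inj this).1.symm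

end QuadraticNormalisation

/-- Right class 3 is the domino rule: normalising `a|q|q₂` with `q|q₂` normal only needs the
two pair normalisations `a|q ↦ s|t` and `t|q₂ ↦ u|u₂`. -/
lemma RightClass.domino {A : Type*} {N : List A → List A} (h3 : RightClass N 3)
    {a q q₂ s t u u₂ : A}
    (hn : N [q, q₂] = [q, q₂]) (h₁ : N [a, q] = [s, t]) (h₂ : N [t, q₂] = [u, u₂]) :
    N [a, q, q₂] = [s, u, u₂] := by
  rw [h3 _ rfl]
  change applyAt N 2 (applyAt N 1 (applyAt N 2 [a, q, q₂])) = [s, u, u₂]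
  simp [applyAt, hn, h₁, h₂]

def IsReducedNormal {A : Type*} (N : List A → List A) (e : A) (w : List A) : Prop :=
  N w = w ∧ e ∉ w

/-- `η` is the factorability structure associated with `(S, N)`: it splits off the first letter
of the `e`-free normal form. -/
def EtaOfNormalForm {M : Type*} [Monoid M] {S : Set M} (N : List ↥S → List ↥S) (e : ↥S)
    (eta : M → M × M) : Prop :=
  ∀ f : M, f ≠ 1 → ∀ w : List ↥S, evList w = f →
    ∃ (s : ↥S) (rest : List ↥S),
      removeE e (N w) = s :: rest ∧ eta f = ((s : M), evList rest)

namespace IsReducedNormal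

variable {A : Type*} {N : List A → List A} {e a : A} {w : List A}

lemma head_ne (hw : IsReducedNormal N e (a :: w)) : a ≠ e :=
  fun h => hw.2 (h ▸ List.mem_cons_self)

lemma of_cons (hQ : QuadraticNormalisation N) (hw : IsReducedNormal N e (a :: w)) :
    IsReducedNormal N e w :=
  ⟨hQ.normal_of_normal_cons hw.1, fun h => hw.2 (List.mem_cons_of_mem a h)⟩

end IsReducedNormal

section Monoid

variable {M : Type*} [Monoid M] {S : Set M} {N : List ↥S → List ↥S} {e : ↥S}

@[simp]
lemma evList_nil : evList ([] : List ↥S) = (1 : M) := rfl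

@[simp]
lemma evList_cons (a : ↥S) (w : List ↥S) : evList (a :: w) = (a : M) * evList w :=
  List.prod_cons

lemma evList_removeE (he : (e : M) = 1) (w : List ↥S) : evList (removeE e w) = evList w := by
  induction w with
  | nil => rfl
  | cons a w ih =>
    rw [removeE_cons]
    split_ifs with ha
    · rw [ih, evList_cons, ha, he, one_mul]
    · rw [evList_cons, evList_cons, ih]

lemma exists_evList_eq (hPres : PresentedModE S N e) (f : M) : ∃ w : List ↥S, evList w = f := by
  obtain ⟨u, rfl⟩ := hPres.1 f
  exact ⟨u.toList, by simp [evList, FreeMonoid.lift_apply]⟩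

lemma evList_N (hPres : PresentedModE S N e) (w : List ↥S) : evList (N w) = evList w := by
  have h := (hPres.2 (FreeMonoid.ofList w) (FreeMonoid.ofList (N w))).mpr
    (ConGen.Rel.of _ _ (Or.inl (by simp)))
  simpa [FreeMonoid.lift_ofList, evList] using h.symm

lemma mul_eq_of_N_pair (hPres : PresentedModE S N e) {a b c d : ↥S} (h : N [a, b] = [c, d]) :
    (c : M) * d = a * b := by
  simpa [h] using evList_N hPres [a, b]

lemma coe_ne_one_of_ne (he : (e : M) = 1) {x : ↥S} (hx : x ≠ e) : (x : M) ≠ 1 :=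
  fun h => hx (Subtype.ext (h.trans he.symm))

lemma evList_cons_ne_one (hnoinv : ∀ a b : M, a * b = 1 → a = 1) (he : (e : M) = 1)
    {p : ↥S} (hp : p ≠ e) (w : List ↥S) : evList (p :: w) ≠ 1 := by
  rw [evList_cons]
  exact fun h => coe_ne_one_of_ne he hp (hnoinv _ _ h)

lemma exists_isReducedNormal (hQ : QuadraticNormalisation N) (hPres : PresentedModE S N e)
    (he : (e : M) = 1) (f : M) : ∃ w, IsReducedNormal N e w ∧ evList w = f := by
  obtain ⟨w, rfl⟩ := exists_evList_eq hPres f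
  induction h : w.length using Nat.strong_induction_on generalizing w with
  | _ n ih =>
    by_cases hmem : e ∈ N w
    · obtain ⟨v, hv, hev⟩ :=
        ih _ (h ▸ hQ.len w ▸ length_removeE_lt e hmem) (removeE e (N w)) rfl
      exact ⟨v, hv, by rw [hev, evList_removeE he, evList_N hPres]⟩
    · exact ⟨N w, ⟨hQ.N_N w, hmem⟩, evList_N hPres w⟩

lemma eta_evList_of_isReducedNormal (hnoinv : ∀ a b : M, a * b = 1 → a = 1)
    (he : (e : M) = 1) {eta : M → M × M} (hetaN : EtaOfNormalForm N e eta) {p : ↥S}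
    {w : List ↥S} (hw : IsReducedNormal N e (p :: w)) :
    eta (evList (p :: w)) = ((p : M), evList w) := by
  obtain ⟨s, rest, hN, heta⟩ :=
    hetaN _ (evList_cons_ne_one hnoinv he hw.head_ne w) (p :: w) rfl
  rw [hw.1, removeE_eq_self e hw.2, List.cons.injEq] at hN
  rw [heta, hN.1, hN.2]

lemma head_ne_of_N_pair (hnoinv : ∀ a b : M, a * b = 1 → a = 1) (he : (e : M) = 1)
    (hQ : QuadraticNormalisation N) (hNeu : Neutral N e) (hPres : PresentedModE S N e)
    {a b c d : ↥S} (hb : b ≠ e) (h : N [a, b] = [c, d]) : c ≠ e := by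
  intro hc
  rw [hc] at h
  have hd : d = e := hQ.eq_of_normal_neutral_pair hNeu (h ▸ hQ.N_N [a, b])
  have hab : (a : M) * b = 1 := by rw [← mul_eq_of_N_pair hPres h, hd, he, one_mul]
  rw [hnoinv _ _ hab, one_mul] at hab
  exact coe_ne_one_of_ne he hb hab

lemma exists_isReducedNormal_of_normal_pair (he : (e : M) = 1) (hQ : QuadraticNormalisation N)
    {s t : ↥S} (hs : s ≠ e) (hst : N [s, t] = [s, t]) :
    ∃ z, IsReducedNormal N e (s :: z) ∧ evList z = (t : M) := by
  by_cases ht : t = e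
  · refine ⟨[], ⟨hQ.letter s, by simpa using Ne.symm hs⟩, ?_⟩
    rw [evList_nil, ht, he]
  · exact ⟨[t], ⟨hst, by simp [Ne.symm hs, Ne.symm ht]⟩, by simp⟩

lemma exists_isReducedNormal_cons_of_N_pair (hnoinv : ∀ a b : M, a * b = 1 → a = 1)
    (he : (e : M) = 1) (hQ : QuadraticNormalisation N) (hNeu : Neutral N e)
    (hPres : PresentedModE S N e) (h3 : RightClass N 3) {a q s t : ↥S} {w : List ↥S}
    (hw : IsReducedNormal N e (q :: w)) (hst : N [a, q] = [s, t]) :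
    ∃ z, IsReducedNormal N e (s :: z) ∧ evList z = (t : M) * evList w := by
  have hs : s ≠ e := head_ne_of_N_pair hnoinv he hQ hNeu hPres hw.head_ne hst
  induction w generalizing a q s t with
  | nil => simpa using exists_isReducedNormal_of_normal_pair he hQ hs (hst ▸ hQ.N_N [a, q])
  | cons q₂ w ih =>
    obtain ⟨u, u₂, htu⟩ := hQ.exists_eq_pair t q₂
    have hw₂ := hw.of_cons hQ
    obtain ⟨z, hz, hzev⟩ :=
      ih hw₂ htu (head_ne_of_N_pair hnoinv he hQ hNeu hPres hw₂.head_ne htu)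
    have hdom := h3.domino (hQ.pair_normal (u := []) hw.1 rfl) hst htu
    have hsu : N [s, u] = [s, u] := hQ.pair_normal (u := []) (hdom ▸ hQ.N_N _) rfl
    refine ⟨u :: z, ⟨hQ.normal_cons_cons hsu hz.1,
      List.not_mem_cons_of_ne_of_not_mem (Ne.symm hs) hz.2⟩, ?_⟩
    rw [evList_cons, hzev, ← mul_assoc, mul_eq_of_N_pair hPres htu, mul_assoc, evList_cons]

lemma eta_mul_evList_cons (hnoinv : ∀ a b : M, a * b = 1 → a = 1) (he : (e : M) = 1)
    (hQ : QuadraticNormalisation N) (hNeu : Neutral N e) (hPres : PresentedModE S N e)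
    (h3 : RightClass N 3) {eta : M → M × M} (hetaN : EtaOfNormalForm N e eta) (a : ↥S)
    {q : ↥S} {w : List ↥S} (hw : IsReducedNormal N e (q :: w)) :
    eta (a * evList (q :: w)) = ((eta (a * q)).1, (eta (a * q)).2 * evList w) := by
  obtain ⟨s, t, hst⟩ := hQ.exists_eq_pair a q
  have key : ∀ w', IsReducedNormal N e (q :: w') →
      eta (a * evList (q :: w')) = ((s : M), t * evList w') := by
    intro w' hw'
    obtain ⟨z, hz, hzev⟩ :=
      exists_isReducedNormal_cons_of_N_pair hnoinv he hQ hNeu hPres h3 hw' hst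
    have hev : (a : M) * evList (q :: w') = evList (s :: z) := by
      rw [evList_cons, evList_cons, hzev, ← mul_assoc, ← mul_assoc, mul_eq_of_N_pair hPres hst]
    rw [hev, eta_evList_of_isReducedNormal hnoinv he hetaN hz, hzev]
  have hq := key [] ⟨hQ.letter q, by simpa using hw.head_ne.symm⟩
  rw [evList_cons, evList_nil, mul_one, mul_one] at hq
  rw [key w hw, hq]

end Monoid

theorem leftWeighted_class43_strong_conditions_general {M : Type*} [Monoid M] (S : Set M)
    (hnoinv : ∀ a b : M, a * b = 1 → a = 1)
    (N : List ↥S → List ↥S) (e : ↥S) (he : (e : M) = 1)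
    (hQ : QuadraticNormalisation N) (hNeu : Neutral N e)
    (hPres : PresentedModE S N e) (h43 : IsClass N 4 3)
    (eta : M → M × M)
    (heta1 : eta 1 = (1, 1))
    (hetaN : ∀ f : M, f ≠ 1 → ∀ w : List ↥S, evList w = f →
      ∃ (s : ↥S) (rest : List ↥S),
        removeE e (N w) = s :: rest ∧ eta f = ((s : M), evList rest)) :
    ∀ s : M, s ∈ S → s ≠ 1 → ∀ f : M,
      (eta (s * f)).1 = (eta (s * (eta f).1)).1 ∧
      (eta (s * f)).2 = (eta (s * (eta f).1)).2 * (eta f).2 := by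
  intro s hs _ f
  obtain ⟨w, hw, rfl⟩ := exists_isReducedNormal hQ hPres he f
  cases w with
  | nil => simp [heta1]
  | cons q w =>
    rw [eta_evList_of_isReducedNormal hnoinv he hetaN hw]
    exact Prod.ext_iff.mp (eta_mul_evList_cons hnoinv he hQ hNeu hPres h43.2 hetaN ⟨s, hs⟩ hw)

/-- let `(S, N)` be a left-weighted quadratic normalisation of
class `(4,3)` mod `1` for a left-cancellative monoid `M` with no nontrivial
invertible element. Then the associated factorability structure `η` satisfies
`(sf)' = (s·f')'` and `overline{sf} = overline{s·f'} · f̄` for all `s ∈ S∖{1}`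
and `f ∈ M`. -/
theorem leftWeighted_class43_strong_conditions {M : Type*} [Monoid M] (S : Set M)
    (hcancel : ∀ a b c : M, a * b = a * c → b = c)
    (hnoinv : ∀ a b : M, a * b = 1 → a = 1)
    (N : List ↥S → List ↥S) (e : ↥S) (he : (e : M) = 1)
    (hQ : QuadraticNormalisation N) (hNeu : Neutral N e)
    (hPres : PresentedModE S N e) (h43 : IsClass N 4 3)
    (hLW : ∀ s t s' t' : ↥S, N [s, t] = [s', t'] → ∃ c : M, (s : M) * c = (s' : M))
    (eta : M → M × M) (hfac : Factorability S eta)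
    (heta1 : eta 1 = (1, 1))
    (hetaN : ∀ f : M, f ≠ 1 → ∀ w : List ↥S, evList w = f →
      ∃ (s : ↥S) (rest : List ↥S),
        removeE e (N w) = s :: rest ∧ eta f = ((s : M), evList rest)) :
    ∀ s : M, s ∈ S → s ≠ 1 → ∀ f : M,
      (eta (s * f)).1 = (eta (s * (eta f).1)).1 ∧
      (eta (s * f)).2 = (eta (s * (eta f).1)).2 * (eta f).2 :=
  leftWeighted_class43_strong_conditions_general S hnoinv N e he hQ hNeu hPres h43 eta heta1 hetaN
end

section
/- Let (M, S, η) be a factorable monoid such that (ημ)_{2121}(r,s,t) = (ημ)_{212}(r,s,t) holds for all (r,s,t) ∈ (S∖{1})³. Then for all s ∈ S∖{1} and f ∈ M, the equalities (sf)′ = (s·f′)′ and \overline{sf} = \overline{s·f′} · f̄ hold. -/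
/-! For `s ∈ S`, the factorability axiom at `(s, f, 1)`, where `F₂F₁F₂` does not shorten the
triple, shows that `η(sf) = (s, f)` as soon as `η(s f') = (s, f')`. The theorem then follows by
strong induction on the length of `f`: with `c = (s f')'` and `u = \overline{s f'} ∈ S`, the
hypothesis at `(s, f', (f̄)')` says `η(c (u (f̄)')') = (c, (u (f̄)')')`, the induction hypothesis
for `u` and `f̄` replaces `(u (f̄)')'` by `(u f̄)'`, and so `η(s f) = η(c · u f̄) = (c, u f̄)`. -/

section

variable {M : Type*} [Monoid M] {S : Set M}

theorem lenS_one (S : Set M) : lenS S (1 : M) = 0 :=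
  Nat.eq_zero_of_le_zero (Nat.sInf_le ⟨[], rfl, by simp, rfl⟩)

theorem lenS_le_one_of_mem {g : M} (hg : g ∈ S) : lenS S g ≤ 1 :=
  Nat.sInf_le ⟨[g], rfl, by simpa using hg, by simp⟩

namespace Factorability

variable {eta : M → M × M} (hfac : Factorability S eta)
include hfac

local notation "ημ" => fun p : M × M => eta (Prod.fst p * Prod.snd p)

theorem exists_list_length_eq_lenS (f : M) :
    ∃ l : List M, l.length = lenS S f ∧ (∀ x ∈ l, x ∈ S) ∧ l.prod = f := by
  obtain ⟨l, hS, hprod⟩ := hfac.gen f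
  exact Nat.sInf_mem (s := {n | ∃ l : List M, l.length = n ∧ (∀ x ∈ l, x ∈ S) ∧ l.prod = f})
    ⟨l.length, l, rfl, hS, hprod⟩

theorem lenS_pos {f : M} (hf : f ≠ 1) : 0 < lenS S f := by
  obtain ⟨l, hlen, -, hprod⟩ := hfac.exists_list_length_eq_lenS f
  rw [← hlen, List.length_pos_iff]
  rintro rfl
  exact hf hprod.symm

theorem mem_of_lenS_le_one {f : M} (hf : lenS S f ≤ 1) : f ∈ S := by
  obtain ⟨l, hlen, hS, rfl⟩ := hfac.exists_list_length_eq_lenS f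
  rw [← hlen] at hf
  match l, hf with
  | [], _ => exact hfac.one_mem
  | [_], _ => simpa using hS
  | _ :: _ :: _, hf => simp at hf

theorem lenS_mul_le (f g : M) : lenS S (f * g) ≤ lenS S f + lenS S g := by
  obtain ⟨l, hl, hlS, rfl⟩ := hfac.exists_list_length_eq_lenS f
  obtain ⟨m, hm, hmS, rfl⟩ := hfac.exists_list_length_eq_lenS g
  refine Nat.sInf_le ⟨l ++ m, by simp [hl, hm], ?_, List.prod_append⟩
  simpa [or_imp, forall_and] using ⟨hlS, hmS⟩

theorem fst_mul_snd (f : M) : (eta f).1 * (eta f).2 = f := by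
  obtain rfl | hf := eq_or_ne f 1
  · simp [hfac.eta_one]
  · exact hfac.split f hf

theorem lenS_eq_add (f : M) : lenS S f = lenS S (eta f).1 + lenS S (eta f).2 := by
  obtain rfl | hf := eq_or_ne f 1
  · simp [hfac.eta_one, lenS_one]
  · exact hfac.geodesic f hf

theorem fst_mem (f : M) : (eta f).1 ∈ S := by
  obtain rfl | hf := eq_or_ne f 1
  · simpa [hfac.eta_one] using hfac.one_mem
  · exact (hfac.head_mem f hf).1

theorem lenS_snd_lt {f : M} (hf : f ≠ 1) : lenS S (eta f).2 < lenS S f := by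
  have := hfac.lenS_pos (hfac.head_mem f hf).2
  have := hfac.lenS_eq_add f
  omega

theorem eta_of_mem {g : M} (hg : g ∈ S) : eta g = (g, 1) := by
  obtain rfl | hg1 := eq_or_ne g 1
  · exact hfac.eta_one
  have hsnd : (eta g).2 = 1 := by
    by_contra hne
    have := hfac.lenS_pos hne
    have := hfac.lenS_pos (hfac.head_mem g hg1).2
    have := hfac.lenS_eq_add g
    have := lenS_le_one_of_mem hg
    omega
  have hfst := hfac.fst_mul_snd g
  rw [hsnd, mul_one] at hfst
  exact Prod.ext hfst hsnd

theorem snd_eta_mul_mem {s t : M} (hs : s ∈ S) (ht : t ∈ S) : (eta (s * t)).2 ∈ S := by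
  obtain hst | hst := eq_or_ne (s * t) 1
  · simpa [hst, hfac.eta_one] using hfac.one_mem
  apply hfac.mem_of_lenS_le_one
  have := hfac.lenS_pos (hfac.head_mem _ hst).2
  have := hfac.lenS_eq_add (s * t)
  have := hfac.lenS_mul_le s t
  have := lenS_le_one_of_mem hs
  have := lenS_le_one_of_mem ht
  omega

theorem C2121_eq_C212_and_C1212_eq_C212_of_tripLen_le {x : M × M × M}
    (hx : tripLen S x ≤ tripLen S (C212 ημ x)) :
    C2121 ημ x = C212 ημ x ∧ C1212 ημ x = C212 ημ x :=
  (hfac.axm x).resolve_right fun hlt => hx.not_gt hlt.2.1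

theorem eta_fst_mul_fst_snd (f : M) :
    eta ((eta f).1 * (eta (eta f).2).1) = ((eta f).1, (eta (eta f).2).1) := by
  have hC212 : C212 ημ (f, 1, 1) = ((eta f).1, (eta (eta f).2).1, (eta (eta f).2).2) := by
    simp [C212, app1, app2, hfac.eta_one]
  have hle : tripLen S (f, 1, 1) ≤ tripLen S (C212 ημ (f, 1, 1)) := by
    have := hfac.lenS_eq_add f
    have := hfac.lenS_eq_add (eta f).2
    simp only [hC212, tripLen, lenS_one]
    omega
  have h := (hfac.C2121_eq_C212_and_C1212_eq_C212_of_tripLen_le hle).1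
  simp only [C2121, Function.comp_apply, hC212, app1, Prod.mk.injEq] at h
  exact Prod.ext h.1 h.2.1

theorem eta_mul_eq_of_eta_mul_fst_eq {s f : M} (hst : eta (s * (eta f).1) = (s, (eta f).1)) :
    eta (s * f) = (s, f) := by
  have hC212 : C212 ημ (s, f, 1) = (s, (eta f).1, (eta f).2) := by
    simp [C212, app1, app2, hst, hfac.fst_mul_snd]
  have hle : tripLen S (s, f, 1) ≤ tripLen S (C212 ημ (s, f, 1)) := by
    have := hfac.lenS_eq_add f
    simp only [hC212, tripLen, lenS_one]
    omega
  have hC1212 : C1212 ημ (s, f, 1) =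
      ((eta (s * f)).1, (eta (eta (s * f)).2).1, (eta (eta (s * f)).2).2) := by
    simp [C1212, C212, app1, app2, hfac.eta_fst_mul_fst_snd, hfac.fst_mul_snd]
  have h := (hfac.C2121_eq_C212_and_C1212_eq_C212_of_tripLen_le hle).2
  simp only [hC1212, hC212, Prod.mk.injEq] at h
  obtain ⟨hfst, hsnd_fst, hsnd_snd⟩ := h
  refine Prod.ext hfst ?_
  rw [← hfac.fst_mul_snd (eta (s * f)).2, hsnd_fst, hsnd_snd, hfac.fst_mul_snd]

theorem eta_mul_eq_of_C2121_eq_C212 {t g : M}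
    (hstab : C2121 ημ (t, (eta g).1, (eta (eta g).2).1) =
      C212 ημ (t, (eta g).1, (eta (eta g).2).1))
    (hhead : (eta ((eta (t * (eta g).1)).2 * (eta g).2)).1 =
      (eta ((eta (t * (eta g).1)).2 * (eta (eta g).2).1)).1) :
    eta (t * g) = ((eta (t * (eta g).1)).1, (eta (t * (eta g).1)).2 * (eta g).2) := by
  set c := (eta (t * (eta g).1)).1
  set u := (eta (t * (eta g).1)).2
  have hC212 : C212 ημ (t, (eta g).1, (eta (eta g).2).1) =
      (c, (eta (u * (eta (eta g).2).1)).1, (eta (u * (eta (eta g).2).1)).2) := by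
    simp [C212, app1, app2, hfac.eta_fst_mul_fst_snd, c, u]
  simp only [C2121, Function.comp_apply, hC212, app1, Prod.mk.injEq] at hstab
  have hstable : eta (c * (eta (u * (eta g).2)).1) = (c, (eta (u * (eta g).2)).1) := by
    rw [hhead]
    exact Prod.ext hstab.1 hstab.2.1
  have htg : t * g = c * (u * (eta g).2) := by
    rw [← mul_assoc, hfac.fst_mul_snd (t * (eta g).1), mul_assoc, hfac.fst_mul_snd]
  rw [htg]
  exact hfac.eta_mul_eq_of_eta_mul_fst_eq hstable

theorem C2121_eq_C212_of_mem
    (h : ∀ r s t : M, r ∈ S → s ∈ S → t ∈ S → r ≠ 1 → s ≠ 1 → t ≠ 1 →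
      C2121 ημ (r, s, t) = C212 ημ (r, s, t))
    {r s t : M} (hr : r ∈ S) (hs : s ∈ S) (ht : t ∈ S) :
    C2121 ημ (r, s, t) = C212 ημ (r, s, t) := by
  -- with an entry equal to `1`, both sides are `η` of the product of the other two, padded by `1`
  obtain rfl | hr1 := eq_or_ne r 1
  · simp [C2121, C212, app1, app2, hfac.fst_mul_snd, hfac.eta_of_mem (hfac.fst_mem _),
      hfac.eta_of_mem (hfac.snd_eta_mul_mem hs ht)]
  obtain rfl | hs1 := eq_or_ne s 1
  · simp [C2121, C212, app1, app2, hfac.fst_mul_snd, hfac.eta_of_mem ht,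
      hfac.eta_of_mem (hfac.snd_eta_mul_mem hr ht)]
  obtain rfl | ht1 := eq_or_ne t 1
  · simp [C2121, C212, app1, app2, hfac.fst_mul_snd, hfac.eta_of_mem hs,
      hfac.eta_of_mem (hfac.snd_eta_mul_mem hr hs)]
  exact h r s t hr hs ht hr1 hs1 ht1

theorem eta_mul_of_mem
    (hstab : ∀ r s t : M, r ∈ S → s ∈ S → t ∈ S → C2121 ημ (r, s, t) = C212 ημ (r, s, t))
    (f : M) {t : M} (ht : t ∈ S) :
    eta (t * f) = ((eta (t * (eta f).1)).1, (eta (t * (eta f).1)).2 * (eta f).2) := by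
  obtain rfl | hf := eq_or_ne f 1
  · simp [hfac.eta_one]
  refine hfac.eta_mul_eq_of_C2121_eq_C212 (hstab _ _ _ ht (hfac.fst_mem f) (hfac.fst_mem _)) ?_
  exact (Prod.ext_iff.mp
    (eta_mul_of_mem hstab (eta f).2 (hfac.snd_eta_mul_mem ht (hfac.fst_mem f)))).1
termination_by lenS S f
decreasing_by exact hfac.lenS_snd_lt hf

end Factorability

end

/-- if `(M, S, η)` is a factorable monoid such that
`(ημ)_{2121} = (ημ)_{212}` on `(S∖{1})³`, then for all `s ∈ S∖{1}` and `f ∈ M`,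
`(sf)' = (s·f')'` and `overline{sf} = overline{s·f'} · f̄`. -/
theorem stable212_implies_strong_conditions {M : Type*} [Monoid M] (S : Set M)
    (eta : M → M × M) (hfac : Factorability S eta)
    (h : ∀ r s t : M, r ∈ S → s ∈ S → t ∈ S → r ≠ 1 → s ≠ 1 → t ≠ 1 →
      C2121 (fun p : M × M => eta (p.1 * p.2)) (r, s, t) =
        C212 (fun p : M × M => eta (p.1 * p.2)) (r, s, t)) :
    ∀ s : M, s ∈ S → s ≠ 1 → ∀ f : M,
      (eta (s * f)).1 = (eta (s * (eta f).1)).1 ∧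
      (eta (s * f)).2 = (eta (s * (eta f).1)).2 * (eta f).2 := by
  intro s hs _ f
  exact Prod.ext_iff.mp <|
    hfac.eta_mul_of_mem (fun _ _ _ => hfac.C2121_eq_C212_of_mem h) f hs
end
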